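/- arXiv:1503.01535 — 7 statements merged into one kernel-verified Lean document; each statement's English description precedes it below -/
import Mathlib

section
/- Let N and m be natural numbers with N ≥ 1, and let σ be a permutation of {1,…,N}, where σ(n) is the position (1-indexed) at which container n is retrieved; containers are indexed in increasing order of departure time (container n departs before container n' whenever n < n'). If for every n ∈ {1,…,N} at most (n−1)+m containers are retrieved before container n (i.e., σ(n) ≤ n+m), then for every n ∈ {1,…,N} the number of out-of-order retrievals before container n is at most m, i.e., the cardinality of { n' ∈ {1,…,N} : n' > n and σ(n') < σ(n) } is at most m. -/
/-!
The containers `n' ≤ n` and the containers `n' > n` retrieved before `n` are all retrieved at a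
position `≤ n + m`: the former since `σ n' ≤ n' + m ≤ n + m`, the latter since they precede `n`.
As there are only `n + m + 1` such positions, the `n + 1` containers `n' ≤ n` leave room for at
most `m` out-of-order retrievals.
-/

open Finset Function

theorem card_filter_lt_le_of_injective {α : Type*} [Fintype α] {f : α → ℕ} (hf : Injective f)
    (k : ℕ) : #{i | f i < k} ≤ k := by
  simpa using card_le_card_of_injOn f (t := range k) (by intro i hi; simpa using hi)
    hf.injOn

theorem card_inversions_le_of_le_add {N m : ℕ} {f : Fin N → ℕ} (hf : Injective f)
    (hle : ∀ i, f i ≤ i + m) (n : Fin N) : #{i | n < i ∧ f i < f n} ≤ m := by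
  have hdisj : Disjoint ({i | n < i ∧ f i < f n} : Finset (Fin N)) (Iic n) :=
    disjoint_left.2 fun i hi hi' => (mem_Iic.1 hi').not_gt (mem_filter.1 hi).2.1
  have hsub : ({i | n < i ∧ f i < f n} : Finset (Fin N)) ∪ Iic n ⊆
      ({i | f i < n + m + 1} : Finset (Fin N)) := by
    intro i hi
    have := hle i
    have := hle n
    simp only [mem_union, mem_filter, mem_univ, true_and, mem_Iic] at hi ⊢
    rcases hi with hi | hi
    · omega
    · have : (i : ℕ) ≤ n := hi
      omega
  have := (card_union_of_disjoint hdisj).symm.trans_le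
    ((card_le_card hsub).trans (card_filter_lt_le_of_injective hf _))
  rw [Fin.card_Iic] at this
  omega

theorem stmt0_general (N m : ℕ) (σ : Equiv.Perm (Fin N))
    (h : ∀ n : Fin N, (σ n : ℕ) + 1 ≤ ((n : ℕ) + 1) + m) :
    ∀ n : Fin N,
      (Finset.univ.filter (fun n' : Fin N => n < n' ∧ σ n' < σ n)).card ≤ m := by
  intro n
  simpa only [Fin.lt_def] using card_inversions_le_of_le_add (f := fun i => (σ i : ℕ))
    (Fin.val_injective.comp σ.injective) (fun i => by have := h i; omega) n

/-- A retrieval order for `N` containers is a permutation `σ` of `{1,…,N}`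
(modeled as `Equiv.Perm (Fin N)`, where container `n : Fin N` corresponds to the
1-indexed container `n+1` and `σ n` to the 1-indexed retrieval position `σ n + 1`).
Containers are indexed in increasing order of departure time.  If for every container `n`
at most `(n−1)+m` containers are retrieved before it (1-indexed: `σ(n) ≤ n + m`, i.e.
`(σ n : ℕ) + 1 ≤ ((n : ℕ) + 1) + m`), then for every `n` the number of out-of-order
retrievals before container `n`, i.e. the number of `n' > n` with `σ n' < σ n`,
is at most `m`. -/
theorem stmt0 (N m : ℕ) (hN : 1 ≤ N) (σ : Equiv.Perm (Fin N))
    (h : ∀ n : Fin N, (σ n : ℕ) + 1 ≤ ((n : ℕ) + 1) + m) :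
    ∀ n : Fin N,
      (Finset.univ.filter (fun n' : Fin N => n < n' ∧ σ n' < σ n)).card ≤ m :=
  stmt0_general N m σ h
end

section
/- Consider the CRP model with a strictly increasing departure schedule d and no upper time windows, and suppose the set of FCFS-feasible sequences from the given initial configuration is nonempty. Let R* be the minimum relocation count over all FCFS-feasible sequences, and let H be any natural number with H ≥ R*. Then there exists an FCFS-feasible sequence whose relocation count equals R* and in which, for every n ∈ {1,…,N}, container n is retrieved no later than time d(n) + H + max(n − d(n), 0). In other words, imposing the retrieval time window [d(n), d(n) + δ*(n)] with δ*(n) = H + max(n − d(n), 0) for every container does not increase the minimum number of relocations. -/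
/-! ## The container relocation problem (CRP) model

A bay with `C` columns and at most `P` tiers, containing containers labeled `1,…,N`.
A configuration assigns to each column its stack of container labels; in our encoding the
*head* of the list is the *top* of the stack. -/

/-- A bay configuration: for each column, the stack of container labels in it
(head of the list = top of the stack). -/
abbrev CRPConfig (C : ℕ) := Fin C → List ℕ

/-- A crane move: idle (no change), relocation of the top container of column `src`
onto column `dst`, or retrieval of the top container of column `src` out of the bay. -/
inductive CRPMove (C : ℕ) where
  | idle : CRPMove C
  | reloc (src dst : Fin C) : CRPMove C
  | retrieve (src : Fin C) : CRPMove C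

/-- Whether a move is a relocation. -/
def CRPMove.isReloc {C : ℕ} : CRPMove C → Bool
  | .reloc _ _ => true
  | _ => false

/-- `CRPStep P b mv b'` holds when the move `mv` is applicable to configuration `b`
(with height limit `P`) and transforms it into `b'`. -/
def CRPStep {C : ℕ} (P : ℕ) (b : CRPConfig C) : CRPMove C → CRPConfig C → Prop
  | .idle, b' => b' = b
  | .reloc i k, b' =>
      i ≠ k ∧ b i ≠ [] ∧ (b k).length < P ∧
      b' = fun j => if j = i then (b i).tail
                    else if j = k then (b i).head! :: b k else b j
  | .retrieve i, b' =>
      b i ≠ [] ∧ b' = fun j => if j = i then (b i).tail else b j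

/-- A move sequence over horizon `T` for a `C × P` bay with containers `1,…,N`:
`conf 0` is the initial configuration, in which all `N` containers (and nothing else)
are present, each at most once, with stacks of height at most `P`; `mv t` is the move
performed at time-step `t ∈ {1,…,T}`, and `conf t` the configuration after it. -/
structure CRPSeq (C P N T : ℕ) where
  conf : ℕ → CRPConfig C
  mv : ℕ → CRPMove C
  init_height : ∀ i, (conf 0 i).length ≤ P
  init_labels : ∀ i, ∀ c ∈ conf 0 i, 1 ≤ c ∧ c ≤ N
  init_nodup : ∀ i, (conf 0 i).Nodup
  init_disjoint : ∀ i j, i ≠ j → ∀ c, c ∈ conf 0 i → c ∉ conf 0 j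
  init_all : ∀ n, 1 ≤ n → n ≤ N → ∃ i, n ∈ conf 0 i
  step : ∀ t, 1 ≤ t → t ≤ T → CRPStep P (conf (t - 1)) (mv t) (conf t)

/-- The relocation count of a move sequence: the number of time-steps in `{1,…,T}` whose
move is a relocation. -/
def relocCount {C P N T : ℕ} (M : CRPSeq C P N T) : ℕ :=
  ((Finset.Icc 1 T).filter (fun t => (M.mv t).isReloc = true)).card

/-- Container `n` is retrieved at time-step `t` in the sequence `M`. -/
def RetrievesAt {C P N T : ℕ} (M : CRPSeq C P N T) (n t : ℕ) : Prop :=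
  1 ≤ t ∧ t ≤ T ∧ ∃ i : Fin C, M.mv t = .retrieve i ∧ (M.conf (t - 1) i).head? = some n

/-- Container `n` is still in the bay at the beginning of time-step `t`. -/
def InBay {C P N T : ℕ} (M : CRPSeq C P N T) (n t : ℕ) : Prop :=
  ∃ i : Fin C, n ∈ M.conf (t - 1) i

/-- Container `n` is available at time-step `t`: its departure time has come and it is
still in the bay at the beginning of step `t`. -/
def AvailableAt {C P N T : ℕ} (M : CRPSeq C P N T) (d : ℕ → ℕ) (n t : ℕ) : Prop :=
  1 ≤ n ∧ n ≤ N ∧ d n ≤ t ∧ InBay M n t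

/-- `M` is a feasible sequence with flexibility level `m` for departure schedule `d`,
with retrieval times `r`: every container `n ∈ {1,…,N}` is retrieved exactly once, at
time `r n ≥ d n`, and for every `n` at most `(n−1)+m` containers are retrieved before
container `n`.  Flexibility level `0` is FCFS-feasibility (containers retrieved exactly
in the order `1,…,N`). -/
structure CRPFeasible {C P N T : ℕ} (M : CRPSeq C P N T) (d : ℕ → ℕ) (m : ℕ)
    (r : ℕ → ℕ) : Prop where
  retrieves : ∀ n, 1 ≤ n → n ≤ N → RetrievesAt M n (r n)
  unique : ∀ n t, 1 ≤ n → n ≤ N → RetrievesAt M n t → t = r n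
  onTime : ∀ n, 1 ≤ n → n ≤ N → d n ≤ r n
  flex : ∀ n, 1 ≤ n → n ≤ N →
    {n' | 1 ≤ n' ∧ n' ≤ N ∧ r n' < r n}.ncard ≤ (n - 1) + m

/-- A strictly increasing departure schedule on `{1,…,N}` with `d 1 ≥ 1`. -/
def StrictSchedule (N : ℕ) (d : ℕ → ℕ) : Prop :=
  1 ≤ d 1 ∧ ∀ n n', 1 ≤ n → n' ≤ N → n < n' → d n < d n'

/-- The set of relocation counts of FCFS-feasible sequences (over all horizons `T`) from
the initial configuration `b0`, for departure schedule `d`. -/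
def FCFSRelocSet (C P N : ℕ) (d : ℕ → ℕ) (b0 : CRPConfig C) : Set ℕ :=
  {R | ∃ T, ∃ M : CRPSeq C P N T, ∃ r,
        M.conf 0 = b0 ∧ CRPFeasible M d 0 r ∧ relocCount M = R}

/-! Replay the non-idle moves of an FCFS-feasible sequence with the minimum number `R*` of
relocations in their original order, idling only while the next container to be retrieved
has not yet departed. While containers `1, …, k` have been retrieved after `ρ` relocations,
the replay clock stays below `d (k + 1) + ρ`: each relocation costs one step, and each
retrieval of `k + 1` happens at the latest at time `d (k + 1) + ρ < d (k + 2) + ρ`. Hence every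
container `n` leaves by `d n + R* ≤ d n + H`, with the same relocations as before. -/

theorem strictMonoOn_Icc_iff_ncard_le {α : Type*} [LinearOrder α] {N : ℕ} {f : ℕ → α}
    (hf : Set.InjOn f (Set.Icc 1 N)) :
    StrictMonoOn f (Set.Icc 1 N) ↔
      ∀ n ∈ Set.Icc 1 N, {n' | 1 ≤ n' ∧ n' ≤ N ∧ f n' < f n}.ncard ≤ n - 1 := by
  constructor
  · intro hmono n hn
    calc {n' | 1 ≤ n' ∧ n' ≤ N ∧ f n' < f n}.ncard ≤ (Set.Ico 1 n).ncard := by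
          refine Set.ncard_le_ncard ?_ (Set.finite_Ico 1 n)
          rintro m ⟨hm1, hmN, hlt⟩
          exact ⟨hm1, lt_of_not_ge fun hnm => ((hmono.le_iff_le hn ⟨hm1, hmN⟩).2 hnm).not_gt hlt⟩
      _ = n - 1 := by simp
  · intro hrank n
    induction n using Nat.strong_induction_on with
    | _ n ih =>
      intro hn n' hn' hlt
      have hnN := hn.2
      -- otherwise `n'` and `1, …, n - 1` are `n` indices where `f` is below `f n`
      by_contra hge
      have hlt' : f n' < f n := lt_of_le_of_ne (not_lt.1 hge) fun h => hlt.ne' (hf hn' hn h)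
      have hsub : insert n' (Set.Ico 1 n) ⊆ {n' | 1 ≤ n' ∧ n' ≤ N ∧ f n' < f n} := by
        rintro m (rfl | ⟨hm1, hmn⟩)
        · exact ⟨hn'.1, hn'.2, hlt'⟩
        · exact ⟨hm1, by omega, ih m hmn ⟨hm1, by omega⟩ hn hmn⟩
      have hcard := (Set.ncard_le_ncard hsub ((Set.finite_Icc 1 N).subset
        fun m hm => ⟨hm.1, hm.2.1⟩)).trans (hrank n hn)
      rw [Set.ncard_insert_of_notMem (fun hmem => lt_asymm hlt hmem.2) (Set.finite_Ico 1 n)] at hcard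
      simp at hcard

section Basic

variable {C P N T : ℕ}

theorem CRPStep.exists_mem_of_mem {b b' : CRPConfig C} {mv : CRPMove C} (h : CRPStep P b mv b')
    {n : ℕ} {j : Fin C} (hn : n ∈ b' j) : ∃ j', n ∈ b j' := by
  cases mv with
  | idle => exact ⟨j, (h : b' = b) ▸ hn⟩
  | reloc i k =>
    obtain ⟨-, hi, -, rfl⟩ := h
    dsimp only at hn
    split_ifs at hn
    · exact ⟨i, List.mem_of_mem_tail hn⟩
    · rcases List.mem_cons.1 hn with rfl | hn
      · exact ⟨i, List.head!_mem_self hi⟩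
      · exact ⟨k, hn⟩
    · exact ⟨j, hn⟩
  | retrieve i =>
    obtain ⟨-, rfl⟩ := h
    dsimp only at hn
    split_ifs at hn
    · exact ⟨i, List.mem_of_mem_tail hn⟩
    · exact ⟨j, hn⟩

namespace CRPSeq

theorem step_succ (M : CRPSeq C P N T) {t : ℕ} (ht : t + 1 ≤ T) :
    CRPStep P (M.conf t) (M.mv (t + 1)) (M.conf (t + 1)) :=
  M.step (t + 1) (Nat.le_add_left 1 t) ht

theorem label_bounds_of_mem (M : CRPSeq C P N T) {t : ℕ} (ht : t ≤ T) {j : Fin C} {n : ℕ}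
    (hn : n ∈ M.conf t j) : 1 ≤ n ∧ n ≤ N := by
  induction t generalizing j with
  | zero => exact M.init_labels j n hn
  | succ t ih =>
    obtain ⟨j', hj'⟩ := (M.step_succ ht).exists_mem_of_mem hn
    exact ih (by omega) hj'

theorem exists_retrievesAt (M : CRPSeq C P N T) {t : ℕ} (ht : t + 1 ≤ T) {i : Fin C}
    (hmv : M.mv (t + 1) = .retrieve i) : ∃ a, RetrievesAt M a (t + 1) := by
  have hstep := M.step_succ ht
  rw [hmv] at hstep
  obtain ⟨a, l, hl⟩ := List.exists_cons_of_ne_nil hstep.1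
  exact ⟨a, by omega, ht, i, hmv, by simp [hl]⟩

end CRPSeq

theorem RetrievesAt.label_bounds {M : CRPSeq C P N T} {n t : ℕ} (h : RetrievesAt M n t) :
    1 ≤ n ∧ n ≤ N := by
  obtain ⟨-, ht, i, -, hhead⟩ := h
  exact M.label_bounds_of_mem (by omega) (List.mem_of_head? hhead)

theorem RetrievesAt.unique {M : CRPSeq C P N T} {a b t : ℕ} (ha : RetrievesAt M a t)
    (hb : RetrievesAt M b t) : a = b := by
  obtain ⟨-, -, i, hi, ha⟩ := ha
  obtain ⟨-, -, j, hj, hb⟩ := hb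
  cases hi.symm.trans hj
  exact Option.some_inj.1 (ha.symm.trans hb)

theorem CRPFeasible.injOn {M : CRPSeq C P N T} {d : ℕ → ℕ} {m : ℕ} {r : ℕ → ℕ}
    (hf : CRPFeasible M d m r) : Set.InjOn r (Set.Icc 1 N) := fun a ha b hb hab =>
  (hf.retrieves a ha.1 ha.2).unique (hab ▸ hf.retrieves b hb.1 hb.2)

theorem CRPFeasible.strictMonoOn {M : CRPSeq C P N T} {d r : ℕ → ℕ}
    (hf : CRPFeasible M d 0 r) : StrictMonoOn r (Set.Icc 1 N) :=
  (strictMonoOn_Icc_iff_ncard_le hf.injOn).2 fun n hn => hf.flex n hn.1 hn.2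

end Basic

section Relocations

variable {C : ℕ}

def relocsUpTo (mv : ℕ → CRPMove C) (t : ℕ) : ℕ :=
  ((Finset.Icc 1 t).filter (fun s => (mv s).isReloc = true)).card

theorem relocCount_eq_relocsUpTo {P N T : ℕ} (M : CRPSeq C P N T) :
    relocCount M = relocsUpTo M.mv T := rfl

@[simp]
theorem relocsUpTo_zero (mv : ℕ → CRPMove C) : relocsUpTo mv 0 = 0 := rfl

theorem relocsUpTo_succ (mv : ℕ → CRPMove C) (t : ℕ) :
    relocsUpTo mv (t + 1) = relocsUpTo mv t + (mv (t + 1)).isReloc.toNat := by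
  unfold relocsUpTo
  rw [← Finset.insert_Icc_right_eq_Icc_add_one (by omega), Finset.filter_insert]
  cases (mv (t + 1)).isReloc <;> simp

theorem relocsUpTo_congr {mv mv' : ℕ → CRPMove C} {t : ℕ}
    (h : ∀ s, 1 ≤ s → s ≤ t → mv s = mv' s) : relocsUpTo mv t = relocsUpTo mv' t := by
  unfold relocsUpTo
  congr 1
  refine Finset.filter_congr fun s hs => ?_
  rw [Finset.mem_Icc] at hs
  rw [h s hs.1 hs.2]

end Relocations

namespace CRPSeq

variable {C P N T : ℕ}

def withHorizon (M : CRPSeq C P N T) (T' : ℕ) : CRPSeq C P N T' where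
  conf s := M.conf (min s T)
  mv s := if s ≤ T then M.mv s else .idle
  init_height := by simpa using M.init_height
  init_labels := by simpa using M.init_labels
  init_nodup := by simpa using M.init_nodup
  init_disjoint := by simpa using M.init_disjoint
  init_all := by simpa using M.init_all
  step s hs _ := by
    by_cases hsT : s ≤ T
    · rw [if_pos hsT, min_eq_left hsT, min_eq_left (by omega)]
      exact M.step s hs hsT
    · rw [if_neg hsT, min_eq_right (by omega), min_eq_right (by omega)]
      rfl

@[simp]
theorem withHorizon_conf_zero (M : CRPSeq C P N T) (T' : ℕ) :
    (M.withHorizon T').conf 0 = M.conf 0 := by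
  simp [withHorizon]

theorem withHorizon_conf_of_le (M : CRPSeq C P N T) (T' : ℕ) {s : ℕ} (hs : T ≤ s) :
    (M.withHorizon T').conf s = M.conf T := by
  simp [withHorizon, hs]

theorem relocCount_withHorizon (M : CRPSeq C P N T) {T' : ℕ} (hT : T ≤ T') :
    relocCount (M.withHorizon T') = relocCount M := by
  suffices ∀ s, T ≤ s → relocsUpTo (M.withHorizon T').mv s = relocCount M from this T' hT
  intro s hs
  induction s, hs using Nat.le_induction with
  | base => exact relocsUpTo_congr fun s _ hs => if_pos hs
  | succ s hs ih =>
    rw [relocsUpTo_succ, ih]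
    simp [withHorizon, show ¬s + 1 ≤ T by omega, CRPMove.isReloc]

theorem retrievesAt_withHorizon (M : CRPSeq C P N T) {T' : ℕ} (hT : T ≤ T') {n s : ℕ} :
    RetrievesAt (M.withHorizon T') n s ↔ RetrievesAt M n s := by
  constructor
  · rintro ⟨hs1, -, i, hi, hhead⟩
    by_cases hsT : s ≤ T
    · simp only [withHorizon, if_pos hsT, min_eq_left (show s - 1 ≤ T by omega)] at hi hhead
      exact ⟨hs1, hsT, i, hi, hhead⟩
    · simp [withHorizon, hsT] at hi
  · rintro ⟨hs1, hsT, i, hi, hhead⟩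
    refine ⟨hs1, hsT.trans hT, i, ?_, ?_⟩
    · simpa [withHorizon, hsT] using hi
    · simpa [withHorizon, show s - 1 ≤ T by omega] using hhead

def snoc (M : CRPSeq C P N T) (mv : CRPMove C) (b' : CRPConfig C)
    (h : CRPStep P (M.conf T) mv b') : CRPSeq C P N (T + 1) where
  conf s := if s ≤ T then M.conf s else b'
  mv s := if s ≤ T then M.mv s else mv
  init_height := by simpa using M.init_height
  init_labels := by simpa using M.init_labels
  init_nodup := by simpa using M.init_nodup
  init_disjoint := by simpa using M.init_disjoint
  init_all := by simpa using M.init_all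
  step s hs hsT := by
    by_cases hs' : s ≤ T
    · simp only [if_pos hs', if_pos (show s - 1 ≤ T by omega)]
      exact M.step s hs hs'
    · obtain rfl : s = T + 1 := by omega
      simpa using h

variable {M : CRPSeq C P N T} {mv : CRPMove C} {b' : CRPConfig C}
  {h : CRPStep P (M.conf T) mv b'}

@[simp]
theorem snoc_conf_zero : (M.snoc mv b' h).conf 0 = M.conf 0 := by
  simp [snoc]

@[simp]
theorem snoc_conf_succ : (M.snoc mv b' h).conf (T + 1) = b' := by
  simp [snoc]

theorem relocCount_snoc : relocCount (M.snoc mv b' h) = relocCount M + mv.isReloc.toNat := by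
  rw [relocCount_eq_relocsUpTo, relocsUpTo_succ]
  congr 1
  · exact relocsUpTo_congr fun s _ hs => if_pos hs
  · simp [snoc]

theorem retrievesAt_snoc {n s : ℕ} :
    RetrievesAt (M.snoc mv b' h) n s ↔
      RetrievesAt M n s ∨ s = T + 1 ∧ ∃ i, mv = .retrieve i ∧ (M.conf T i).head? = some n := by
  constructor
  · rintro ⟨hs1, hsT, i, hi, hhead⟩
    by_cases hs : s ≤ T
    · simp only [snoc, if_pos hs, if_pos (show s - 1 ≤ T by omega)] at hi hhead
      exact Or.inl ⟨hs1, hs, i, hi, hhead⟩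
    · obtain rfl : s = T + 1 := by omega
      simp only [snoc, if_neg hs, Nat.add_sub_cancel, le_refl, if_true] at hi hhead
      exact Or.inr ⟨rfl, i, hi, hhead⟩
  · rintro (⟨hs1, hs, i, hi, hhead⟩ | ⟨rfl, i, hi, hhead⟩)
    · refine ⟨hs1, by omega, i, ?_, ?_⟩
      · simpa [snoc, hs] using hi
      · simpa [snoc, show s - 1 ≤ T by omega] using hhead
    · exact ⟨by omega, le_rfl, i, by simpa [snoc] using hi, by simpa [snoc] using hhead⟩

end CRPSeq

section Replay

variable {C P N T : ℕ} {M : CRPSeq C P N T} {d r : ℕ → ℕ}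

/-- `M'` has replayed the first `t` steps of `M`, in which `M` retrieves exactly the containers
`1, …, k`; `horizon_lt` is the clock invariant that keeps the delays small. -/
structure IsReplay (M : CRPSeq C P N T) (d r : ℕ → ℕ) (t k : ℕ) {T' : ℕ}
    (M' : CRPSeq C P N T') (r' : ℕ → ℕ) : Prop where
  conf_zero : M'.conf 0 = M.conf 0
  conf_horizon : M'.conf T' = M.conf t
  relocCount_eq : relocCount M' = relocsUpTo M.mv t
  le_iff : ∀ n, 1 ≤ n → n ≤ N → (r n ≤ t ↔ n ≤ k)
  retrievesAt : ∀ n, 1 ≤ n → n ≤ k → RetrievesAt M' n (r' n)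
  onTime : ∀ n, 1 ≤ n → n ≤ k → d n ≤ r' n
  le_add : ∀ n, 1 ≤ n → n ≤ k → r' n ≤ d n + relocsUpTo M.mv t
  eq_of_retrievesAt : ∀ n s, RetrievesAt M' n s → n ≤ k ∧ s = r' n
  strictMonoOn : StrictMonoOn r' (Set.Icc 1 k)
  horizon_lt : k < N → T' < d (k + 1) + relocsUpTo M.mv t

theorem IsReplay.zero (hf : CRPFeasible M d 0 r) (hd : StrictSchedule N d) :
    IsReplay M d r 0 0 (M.withHorizon 0) 0 where
  conf_zero := M.withHorizon_conf_zero 0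
  conf_horizon := M.withHorizon_conf_zero 0
  relocCount_eq := rfl
  le_iff n h1 h2 := by
    have := (hf.retrieves n h1 h2).1
    omega
  retrievesAt n h1 h2 := by omega
  onTime n h1 h2 := by omega
  le_add n h1 h2 := by omega
  eq_of_retrievesAt n s h := by
    have := h.1.trans h.2.1
    omega
  strictMonoOn a ha := by
    have := ha.1.trans ha.2
    omega
  horizon_lt _ := by
    simp only [zero_add, relocsUpTo_zero, add_zero]
    exact hd.1

variable {t k T' : ℕ} {M' : CRPSeq C P N T'} {r' : ℕ → ℕ}

theorem IsReplay.withHorizon (h : IsReplay M d r t k M' r') {T'' : ℕ} (hT : T' ≤ T'')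
    (hlt : k < N → T'' < d (k + 1) + relocsUpTo M.mv t) :
    IsReplay M d r t k (M'.withHorizon T'') r' where
  conf_zero := (M'.withHorizon_conf_zero T'').trans h.conf_zero
  conf_horizon := (M'.withHorizon_conf_of_le T'' hT).trans h.conf_horizon
  relocCount_eq := (M'.relocCount_withHorizon hT).trans h.relocCount_eq
  le_iff := h.le_iff
  retrievesAt n h1 h2 := (M'.retrievesAt_withHorizon hT).2 (h.retrievesAt n h1 h2)
  onTime := h.onTime
  le_add := h.le_add
  eq_of_retrievesAt n s hs := h.eq_of_retrievesAt n s ((M'.retrievesAt_withHorizon hT).1 hs)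
  strictMonoOn := h.strictMonoOn
  horizon_lt := hlt

theorem IsReplay.le_succ_iff (h : IsReplay M d r t k M' r') (hf : CRPFeasible M d 0 r)
    (hmv : ∀ i, M.mv (t + 1) ≠ .retrieve i) {n : ℕ} (h1 : 1 ≤ n) (h2 : n ≤ N) :
    r n ≤ t + 1 ↔ n ≤ k := by
  obtain ⟨-, -, i, hi, -⟩ := hf.retrieves n h1 h2
  have : r n ≠ t + 1 := fun heq => hmv i (heq ▸ hi)
  rw [← h.le_iff n h1 h2]
  omega

theorem IsReplay.succ_of_idle (h : IsReplay M d r t k M' r') (hf : CRPFeasible M d 0 r)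
    (ht : t + 1 ≤ T) (hmv : M.mv (t + 1) = .idle) : IsReplay M d r (t + 1) k M' r' := by
  have hstep := M.step_succ ht
  rw [hmv] at hstep
  have hρ : relocsUpTo M.mv (t + 1) = relocsUpTo M.mv t := by
    simp [relocsUpTo_succ, hmv, CRPMove.isReloc]
  refine { h with
    conf_horizon := h.conf_horizon.trans hstep.symm
    relocCount_eq := hρ ▸ h.relocCount_eq
    le_iff := fun n => h.le_succ_iff hf (by simp [hmv])
    le_add := hρ ▸ h.le_add
    horizon_lt := hρ ▸ h.horizon_lt }

theorem IsReplay.succ_of_reloc (h : IsReplay M d r t k M' r') (hf : CRPFeasible M d 0 r)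
    {i j : Fin C} (hmv : M.mv (t + 1) = .reloc i j)
    (hstep : CRPStep P (M'.conf T') (M.mv (t + 1)) (M.conf (t + 1))) :
    IsReplay M d r (t + 1) k (M'.snoc _ _ hstep) r' := by
  have hρ : relocsUpTo M.mv (t + 1) = relocsUpTo M.mv t + 1 := by
    simp [relocsUpTo_succ, hmv, CRPMove.isReloc]
  refine
    { conf_zero := CRPSeq.snoc_conf_zero.trans h.conf_zero
      conf_horizon := CRPSeq.snoc_conf_succ
      relocCount_eq := by simp [CRPSeq.relocCount_snoc, h.relocCount_eq, hρ, hmv, CRPMove.isReloc]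
      le_iff := fun n => h.le_succ_iff hf (by simp [hmv])
      retrievesAt := fun n h1 h2 => CRPSeq.retrievesAt_snoc.2 (Or.inl (h.retrievesAt n h1 h2))
      onTime := h.onTime
      le_add := fun n h1 h2 => (h.le_add n h1 h2).trans (by omega)
      eq_of_retrievesAt := fun n s hs => ?_
      strictMonoOn := h.strictMonoOn
      horizon_lt := fun hk => by have := h.horizon_lt hk; omega }
  rcases CRPSeq.retrievesAt_snoc.1 hs with hs | ⟨-, i', hi', -⟩
  · exact h.eq_of_retrievesAt n s hs
  · simp [hmv] at hi'

theorem IsReplay.eq_succ_of_retrievesAt (h : IsReplay M d r t k M' r')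
    (hf : CRPFeasible M d 0 r) {a : ℕ} (ha : RetrievesAt M a (t + 1)) : a = k + 1 := by
  obtain ⟨ha1, haN⟩ := ha.label_bounds
  have hra : r a = t + 1 := (hf.unique a (t + 1) ha1 haN ha).symm
  have hka : k < a := by
    have := h.le_iff a ha1 haN
    omega
  by_contra hne
  have hlt : r (k + 1) < r a := hf.strictMonoOn ⟨le_add_self, by omega⟩ ⟨ha1, haN⟩ (by omega)
  have := (h.le_iff (k + 1) le_add_self (by omega)).1 (by omega)
  omega

theorem IsReplay.le_succ_iff_of_retrievesAt (h : IsReplay M d r t k M' r')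
    (hf : CRPFeasible M d 0 r) (hret : RetrievesAt M (k + 1) (t + 1)) {n : ℕ} (h1 : 1 ≤ n)
    (h2 : n ≤ N) : r n ≤ t + 1 ↔ n ≤ k + 1 := by
  have hle := h.le_iff n h1 h2
  constructor
  · intro hn
    rcases Nat.lt_or_eq_of_le hn with hn | hn
    · omega
    · exact (h.eq_succ_of_retrievesAt hf (hn ▸ hf.retrieves n h1 h2)).le
  · intro hn
    rcases Nat.lt_or_eq_of_le hn with hn | rfl
    · omega
    · exact (hf.unique _ _ h1 h2 hret).ge

theorem IsReplay.retrievesAt_snoc_iff (h : IsReplay M d r t k M' r')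
    (hret : RetrievesAt M (k + 1) (t + 1))
    (hstep : CRPStep P (M'.conf T') (M.mv (t + 1)) (M.conf (t + 1))) {n s : ℕ} :
    RetrievesAt (M'.snoc _ _ hstep) n s ↔ RetrievesAt M' n s ∨ n = k + 1 ∧ s = T' + 1 := by
  obtain ⟨-, -, i, hmv, hhead⟩ := hret
  rw [CRPSeq.retrievesAt_snoc, h.conf_horizon, hmv]
  refine or_congr_right ⟨fun ⟨hs, i', hi', hhead'⟩ => ?_, fun ⟨hn, hs⟩ => ⟨hs, i, rfl, hn ▸ hhead⟩⟩
  cases hi'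
  exact ⟨Option.some_inj.1 (hhead'.symm.trans hhead), hs⟩

theorem strictMonoOn_update_Icc_succ {α : Type*} [Preorder α] {f : ℕ → α} {k : ℕ} {v : α}
    (hf : StrictMonoOn f (Set.Icc 1 k)) (hv : ∀ n ∈ Set.Icc 1 k, f n < v) :
    StrictMonoOn (Function.update f (k + 1) v) (Set.Icc 1 (k + 1)) := by
  intro x hx y hy hxy
  have hxk : x ≤ k := by
    have := hy.2
    omega
  rw [Function.update_of_ne (by omega)]
  rcases Nat.lt_or_eq_of_le hy.2 with hyk | rfl
  · rw [Function.update_of_ne (by omega)]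
    exact hf ⟨hx.1, hxk⟩ ⟨hy.1, by omega⟩ hxy
  · rw [Function.update_self]
    exact hv x ⟨hx.1, hxk⟩

theorem IsReplay.succ_of_retrieve (h : IsReplay M d r t k M' r') (hf : CRPFeasible M d 0 r)
    (hd : StrictSchedule N d) (hret : RetrievesAt M (k + 1) (t + 1)) (hwait : d (k + 1) ≤ T' + 1)
    (hstep : CRPStep P (M'.conf T') (M.mv (t + 1)) (M.conf (t + 1))) :
    IsReplay M d r (t + 1) (k + 1) (M'.snoc _ _ hstep) (Function.update r' (k + 1) (T' + 1)) := by
  obtain ⟨-, -, i, hmv, -⟩ := id hret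
  have hkN : k < N := hret.label_bounds.2
  have hρ : relocsUpTo M.mv (t + 1) = relocsUpTo M.mv t := by
    simp [relocsUpTo_succ, hmv, CRPMove.isReloc]
  have hlast := h.horizon_lt hkN
  refine
    { conf_zero := CRPSeq.snoc_conf_zero.trans h.conf_zero
      conf_horizon := CRPSeq.snoc_conf_succ
      relocCount_eq := by simp [CRPSeq.relocCount_snoc, h.relocCount_eq, hρ, hmv, CRPMove.isReloc]
      le_iff := fun n => h.le_succ_iff_of_retrievesAt hf hret
      strictMonoOn := strictMonoOn_update_Icc_succ h.strictMonoOn fun n hn =>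
        Nat.lt_succ_of_le (h.retrievesAt n hn.1 hn.2).2.1
      retrievesAt := fun n h1 h2 => ?retrievesAt
      onTime := fun n h1 h2 => ?onTime
      le_add := fun n h1 h2 => ?le_add
      eq_of_retrievesAt := fun n s hs => ?eq_of_retrievesAt
      horizon_lt := fun hk => ?horizon_lt }
  case retrievesAt =>
    rcases Nat.lt_or_eq_of_le h2 with h2 | rfl
    · rw [Function.update_of_ne (by omega)]
      exact (h.retrievesAt_snoc_iff hret hstep).2 (Or.inl (h.retrievesAt n h1 (by omega)))
    · rw [Function.update_self]
      exact (h.retrievesAt_snoc_iff hret hstep).2 (Or.inr ⟨rfl, rfl⟩)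
  case onTime =>
    rcases Nat.lt_or_eq_of_le h2 with h2 | rfl
    · rw [Function.update_of_ne (by omega)]
      exact h.onTime n h1 (by omega)
    · rwa [Function.update_self]
  case le_add =>
    rw [hρ]
    rcases Nat.lt_or_eq_of_le h2 with h2 | rfl
    · rw [Function.update_of_ne (by omega)]
      exact h.le_add n h1 (by omega)
    · rw [Function.update_self]
      omega
  case eq_of_retrievesAt =>
    rcases (h.retrievesAt_snoc_iff hret hstep).1 hs with hs | ⟨rfl, rfl⟩
    · obtain ⟨hnk, rfl⟩ := h.eq_of_retrievesAt n s hs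
      exact ⟨by omega, (Function.update_of_ne (by omega) _ _).symm⟩
    · simp
  case horizon_lt =>
    have := hd.2 (k + 1) (k + 1 + 1) le_add_self hk (by omega)
    omega

theorem exists_isReplay (hf : CRPFeasible M d 0 r) (hd : StrictSchedule N d) (ht : t ≤ T) :
    ∃ k T', ∃ M' : CRPSeq C P N T', ∃ r', IsReplay M d r t k M' r' := by
  induction t with
  | zero => exact ⟨0, 0, M.withHorizon 0, 0, .zero hf hd⟩
  | succ t ih =>
    obtain ⟨k, T', M', r', h⟩ := ih (by omega)
    have hstep := M.step_succ ht
    cases hmv : M.mv (t + 1) with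
    | idle => exact ⟨k, T', M', r', h.succ_of_idle hf ht hmv⟩
    | reloc i j => exact ⟨k, T' + 1, _, r', h.succ_of_reloc hf hmv (h.conf_horizon ▸ hstep)⟩
    | retrieve i =>
      obtain ⟨a, ha⟩ := M.exists_retrievesAt ht hmv
      obtain rfl := h.eq_succ_of_retrievesAt hf ha
      -- idle until `k + 1` has departed, then retrieve it at `max (T' + 1) (d (k + 1))`
      have hidle := h.withHorizon (le_max_left T' (d (k + 1) - 1)) fun hk => by
        have := h.horizon_lt hk
        omega
      exact ⟨k + 1, _, _, _,
        hidle.succ_of_retrieve hf hd ha (by omega) (hidle.conf_horizon ▸ hstep)⟩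

theorem IsReplay.le_of_horizon (h : IsReplay M d r T k M' r') (hf : CRPFeasible M d 0 r)
    {n : ℕ} (h1 : 1 ≤ n) (h2 : n ≤ N) : n ≤ k :=
  (h.le_iff n h1 h2).1 (hf.retrieves n h1 h2).2.1

theorem IsReplay.crpFeasible (h : IsReplay M d r T k M' r') (hf : CRPFeasible M d 0 r) :
    CRPFeasible M' d 0 r' where
  retrieves n h1 h2 := h.retrievesAt n h1 (h.le_of_horizon hf h1 h2)
  unique n s _ _ hs := (h.eq_of_retrievesAt n s hs).2
  onTime n h1 h2 := h.onTime n h1 (h.le_of_horizon hf h1 h2)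
  flex n h1 h2 := by
    have hmono : StrictMonoOn r' (Set.Icc 1 N) :=
      h.strictMonoOn.mono fun n hn => ⟨hn.1, h.le_of_horizon hf hn.1 hn.2⟩
    exact (strictMonoOn_Icc_iff_ncard_le hmono.injOn).1 hmono n ⟨h1, h2⟩

end Replay

theorem stmt2_general (C P N : ℕ) (d : ℕ → ℕ) (hd : StrictSchedule N d)
    (b0 : CRPConfig C)
    (hne : ∃ T, ∃ M : CRPSeq C P N T, ∃ r, M.conf 0 = b0 ∧ CRPFeasible M d 0 r)
    (H : ℕ) (hH : sInf (FCFSRelocSet C P N d b0) ≤ H) :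
    ∃ T, ∃ M : CRPSeq C P N T, ∃ r, M.conf 0 = b0 ∧ CRPFeasible M d 0 r ∧
      relocCount M = sInf (FCFSRelocSet C P N d b0) ∧
      ∀ n, 1 ≤ n → n ≤ N → r n ≤ d n + (H + (n - d n)) := by
  obtain ⟨T, M, r, hM0, hf, hopt⟩ : sInf (FCFSRelocSet C P N d b0) ∈ FCFSRelocSet C P N d b0 := by
    obtain ⟨T, M, r, hM0, hf⟩ := hne
    exact Nat.sInf_mem ⟨relocCount M, T, M, r, hM0, hf, rfl⟩
  obtain ⟨k, T', M', r', h⟩ := exists_isReplay hf hd le_rfl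
  refine ⟨T', M', r', h.conf_zero.trans hM0, h.crpFeasible hf, h.relocCount_eq.trans hopt,
    fun n h1 h2 => ?_⟩
  have hdelay : r' n ≤ d n + relocCount M := h.le_add n h1 (h.le_of_horizon hf h1 h2)
  omega

/-- with a strictly increasing departure schedule `d` and no upper time
windows, suppose the set of FCFS-feasible sequences from the initial configuration `b0`
is nonempty.  Let `R* = sInf (FCFSRelocSet C P N d b0)` be the minimum relocation count
over all FCFS-feasible sequences, and let `H ≥ R*`.  Then there is an FCFS-feasible
sequence whose relocation count equals `R*` and in which every container
`n ∈ {1,…,N}` is retrieved no later than `d n + H + max (n − d n) 0` (the `max` with 0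
realized by truncated `ℕ` subtraction): imposing the retrieval time windows
`[d n, d n + δ* n]` with `δ* n = H + (n - d n)` does not increase the minimum number of
relocations. -/
theorem stmt2 (C P N : ℕ) (hN : 1 ≤ N) (d : ℕ → ℕ) (hd : StrictSchedule N d)
    (b0 : CRPConfig C)
    (hne : ∃ T, ∃ M : CRPSeq C P N T, ∃ r, M.conf 0 = b0 ∧ CRPFeasible M d 0 r)
    (H : ℕ) (hH : sInf (FCFSRelocSet C P N d b0) ≤ H) :
    ∃ T, ∃ M : CRPSeq C P N T, ∃ r, M.conf 0 = b0 ∧ CRPFeasible M d 0 r ∧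
      relocCount M = sInf (FCFSRelocSet C P N d b0) ∧
      ∀ n, 1 ≤ n → n ≤ N → r n ≤ d n + (H + (n - d n)) :=
  stmt2_general C P N d hd b0 hne H hH
end

section
/- In the abstract retrieval timeline, for every n ∈ {1,…,N} one has r(n) ≤ n + H + max(d(n) − n, 0); equivalently, the retrieval delay of container n satisfies r(n) − d(n) ≤ H + max(n − d(n), 0). -/
/-!
Count the steps `1, …, r n`: each is the retrieval of one of the containers `1, …, n`, one of
the at most `H` relocations, or idle, so `r n ≤ n + H + #idle`. If `t` is the last idle step
before `r n`, then no container is available at `t`: every container that departed by `t` was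
already retrieved at a distinct step in `[1, t)`, while `t < d n`. Since `d` increases by at least
one per container, at least `n - (d n - t)` containers departed by `t`, leaving at most
`d n - n` idle steps in `[1, t]`.
-/

open Finset

theorem StrictMonoOn.add_sub_le {f : ℕ → ℕ} {a b : ℕ} (hf : StrictMonoOn f (Set.Icc a b))
    {i j : ℕ} (hai : a ≤ i) (hij : i ≤ j) (hjb : j ≤ b) : f i + (j - i) ≤ f j := by
  induction j, hij using Nat.le_induction with
  | base => simp
  | succ j hij ih =>
    have hstep := hf ⟨hai.trans hij, by omega⟩ ⟨by omega, hjb⟩ (Nat.lt_succ_self j)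
    have := ih (by omega)
    omega

theorem StrictMonoOn.add_sub_le_card_filter_le {f : ℕ → ℕ} {N n t : ℕ}
    (hf : StrictMonoOn f (Set.Icc 1 N)) (hn : n ∈ Set.Icc 1 N) (ht : t ≤ f n) :
    n + t - f n ≤ #{k ∈ Icc 1 N | f k ≤ t} :=
  calc n + t - f n = #(Icc 1 (n + t - f n)) := by simp
    _ ≤ #{k ∈ Icc 1 N | f k ≤ t} := card_le_card fun k hk => by
      rw [mem_Icc] at hk
      have hkn : k ≤ n := by omega
      have := hf.add_sub_le hk.1 hkn hn.2
      simp only [mem_filter, mem_Icc]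
      exact ⟨⟨hk.1, hkn.trans hn.2⟩, by omega⟩

theorem Finset.card_le_card_inter_add_card_add_card_sdiff {α : Type*} [DecidableEq α]
    (s A B : Finset α) : #s ≤ #(s ∩ A) + #B + #(s \ (A ∪ B)) :=
  calc #s ≤ #(s ∩ A ∪ B ∪ s \ (A ∪ B)) := card_le_card fun x hx => by
        simp only [mem_union, mem_inter, mem_sdiff]
        tauto
    _ ≤ #(s ∩ A) + #B + #(s \ (A ∪ B)) :=
        (card_union_le _ _).trans (Nat.add_le_add_right (card_union_le _ _) _)

section RetrievalTimeline

variable {N : ℕ} {d r : ℕ → ℕ} {Rel : Finset ℕ}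

def idleSteps (N : ℕ) (r : ℕ → ℕ) (Rel : Finset ℕ) (T : ℕ) : Finset ℕ :=
  Icc 1 T \ ((Icc 1 N).image r ∪ Rel)

theorem mem_idleSteps {T t : ℕ} : t ∈ idleSteps N r Rel T ↔
    (1 ≤ t ∧ t ≤ T) ∧ t ∉ Rel ∧ ∀ k, 1 ≤ k → k ≤ N → r k ≠ t := by
  simp only [idleSteps, mem_sdiff, mem_Icc, mem_union, mem_image]
  grind

theorem idleSteps_subset {T T' : ℕ} (h : ∀ t ∈ idleSteps N r Rel T, t ≤ T') :
    idleSteps N r Rel T ⊆ idleSteps N r Rel T' := fun t ht => by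
  have := h t ht
  rw [mem_idleSteps] at ht ⊢
  exact ⟨⟨ht.1.1, this⟩, ht.2⟩

theorem le_add_card_idleSteps (hr : StrictMonoOn r (Set.Icc 1 N)) {n : ℕ}
    (hn : n ∈ Set.Icc 1 N) : r n ≤ n + #Rel + #(idleSteps N r Rel (r n)) := by
  have hret : #(Icc 1 (r n) ∩ (Icc 1 N).image r) ≤ n :=
    calc #(Icc 1 (r n) ∩ (Icc 1 N).image r) ≤ #((Icc 1 n).image r) :=
          card_le_card fun x hx => by
            obtain ⟨hx, k, hk, rfl⟩ := by simpa only [mem_inter, mem_image] using hx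
            have hkn : k ≤ n := (hr.le_iff_le (mem_Icc.1 hk) hn).1 (mem_Icc.1 hx).2
            exact mem_image_of_mem r (mem_Icc.2 ⟨(mem_Icc.1 hk).1, hkn⟩)
      _ ≤ n := card_image_le.trans (by simp)
  have := card_le_card_inter_add_card_add_card_sdiff (Icc 1 (r n)) ((Icc 1 N).image r) Rel
  simp only [Nat.card_Icc, add_tsub_cancel_right] at this
  unfold idleSteps
  omega

theorem card_idleSteps_add_card_filter_le (hr : StrictMonoOn r (Set.Icc 1 N))
    (hpos : ∀ k ∈ Icc 1 N, 1 ≤ r k) {t : ℕ} (hgone : ∀ k ∈ Icc 1 N, d k ≤ t → r k < t) :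
    #(idleSteps N r Rel t) + #{k ∈ Icc 1 N | d k ≤ t} ≤ t := by
  set M := {k ∈ Icc 1 N | d k ≤ t}
  have hinj : Set.InjOn r M := hr.injOn.mono fun k hk => mem_Icc.1 (mem_filter.1 hk).1
  have hdisj : Disjoint (idleSteps N r Rel t) (M.image r) := by
    refine disjoint_right.2 fun x hx hidle => ?_
    obtain ⟨k, hk, rfl⟩ := mem_image.1 hx
    have hk := mem_Icc.1 (mem_filter.1 hk).1
    exact (mem_idleSteps.1 hidle).2.2 k hk.1 hk.2 rfl
  have hret : M.image r ⊆ Icc 1 t := fun x hx => by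
    obtain ⟨k, hk, rfl⟩ := mem_image.1 hx
    obtain ⟨hk, hdk⟩ := mem_filter.1 hk
    exact mem_Icc.2 ⟨hpos k hk, (hgone k hk hdk).le⟩
  have hidle : idleSteps N r Rel t ⊆ Icc 1 t := fun x hx => mem_Icc.2 (mem_idleSteps.1 hx).1
  rw [← card_image_of_injOn hinj, ← card_union_of_disjoint hdisj]
  simpa using card_le_card (union_subset hidle hret)

theorem card_idleSteps_le (hd : StrictMonoOn d (Set.Icc 1 N))
    (hr : StrictMonoOn r (Set.Icc 1 N)) (hpos : ∀ k ∈ Icc 1 N, 1 ≤ r k) {n : ℕ}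
    (hn : n ∈ Set.Icc 1 N)
    (hgone : ∀ t ∈ idleSteps N r Rel (r n), ∀ k ∈ Icc 1 N, d k ≤ t → r k < t) :
    #(idleSteps N r Rel (r n)) ≤ d n - n := by
  obtain hempty | hne := (idleSteps N r Rel (r n)).eq_empty_or_nonempty
  · simp [hempty]
  set t := (idleSteps N r Rel (r n)).max' hne
  have ht := max'_mem _ hne
  have htd : t < d n := by
    by_contra! h
    have := hgone t ht n (mem_Icc.2 hn) h
    have := (mem_idleSteps.1 ht).1.2
    omega
  have hsub := card_le_card (idleSteps_subset (Rel := Rel) (T' := t) fun x hx => le_max' _ x hx)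
  have := card_idleSteps_add_card_filter_le (Rel := Rel) hr hpos (hgone t ht)
  have := hd.add_sub_le_card_filter_le hn htd.le
  omega

end RetrievalTimeline

theorem stmt3_general (N H : ℕ) (d r : ℕ → ℕ)
    (hd_mono : ∀ k k', 1 ≤ k → k' ≤ N → k < k' → d k < d k')
    (hr_mono : ∀ k k', 1 ≤ k → k' ≤ N → k < k' → r k < r k')
    (hd1 : 1 ≤ d 1)
    (hdr : ∀ k, 1 ≤ k → k ≤ N → d k ≤ r k)
    (Rel : Finset ℕ)
    (hRel_card : Rel.card ≤ H)
    (hno_idle : ∀ t, 1 ≤ t → (∃ k, 1 ≤ k ∧ k ≤ N ∧ d k ≤ t ∧ t ≤ r k) →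
      ¬ (t ∉ Rel ∧ ∀ k, 1 ≤ k → k ≤ N → r k ≠ t)) :
    ∀ n, 1 ≤ n → n ≤ N →
      r n ≤ n + H + (d n - n) ∧ r n - d n ≤ H + (n - d n) := by
  intro n hn1 hnN
  have hd : StrictMonoOn d (Set.Icc 1 N) := fun k hk k' hk' => hd_mono k k' hk.1 hk'.2
  have hr : StrictMonoOn r (Set.Icc 1 N) := fun k hk k' hk' => hr_mono k k' hk.1 hk'.2
  have hpos : ∀ k ∈ Icc 1 N, 1 ≤ r k := fun k hk => by
    obtain ⟨hk1, hkN⟩ := mem_Icc.1 hk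
    have := hd.monotoneOn ⟨le_rfl, hk1.trans hkN⟩ ⟨hk1, hkN⟩ hk1
    have := hdr k hk1 hkN
    omega
  have hgone : ∀ T, ∀ t ∈ idleSteps N r Rel T, ∀ k ∈ Icc 1 N, d k ≤ t → r k < t := by
    intro T t ht k hk hdk
    obtain ⟨⟨ht1, -⟩, hidle⟩ := mem_idleSteps.1 ht
    obtain ⟨hk1, hkN⟩ := mem_Icc.1 hk
    by_contra! hrt
    exact hno_idle t ht1 ⟨k, hk1, hkN, hdk, hrt⟩ hidle
  have hcount := le_add_card_idleSteps (Rel := Rel) hr ⟨hn1, hnN⟩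
  have hidle := card_idleSteps_le hd hr hpos ⟨hn1, hnN⟩ (hgone (r n))
  omega

/-- abstract retrieval timeline.  Fix `N, H : ℕ` with `N ≥ 1`.
`d k` is the departure time and `r k` the retrieval time of container `k ∈ {1,…,N}`;
both are strictly increasing on `{1,…,N}`, `d 1 ≥ 1` and `d k ≤ r k`.
`Rel` is a finite set of positive time-steps (the relocation steps), disjoint from the
retrieval times, of cardinality at most `H`.  A time-step `t ≥ 1` is idle if
`t ∉ Rel` and `t ≠ r k` for all `k ∈ {1,…,N}`; we assume that whenever some container is
available (`d k ≤ t ≤ r k` for some `k`), `t` is not idle.  Then for every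
`n ∈ {1,…,N}` we have `r n ≤ n + H + max (d n − n) 0`, equivalently
`r n − d n ≤ H + max (n − d n) 0` (truncated `ℕ` subtraction realizes the `max` with 0). -/
theorem stmt3 (N H : ℕ) (hN : 1 ≤ N) (d r : ℕ → ℕ)
    (hd_mono : ∀ k k', 1 ≤ k → k' ≤ N → k < k' → d k < d k')
    (hr_mono : ∀ k k', 1 ≤ k → k' ≤ N → k < k' → r k < r k')
    (hd1 : 1 ≤ d 1)
    (hdr : ∀ k, 1 ≤ k → k ≤ N → d k ≤ r k)
    (Rel : Finset ℕ)
    (hRel_pos : ∀ t ∈ Rel, 1 ≤ t)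
    (hRel_disj : ∀ t ∈ Rel, ∀ k, 1 ≤ k → k ≤ N → r k ≠ t)
    (hRel_card : Rel.card ≤ H)
    (hno_idle : ∀ t, 1 ≤ t → (∃ k, 1 ≤ k ∧ k ≤ N ∧ d k ≤ t ∧ t ≤ r k) →
      ¬ (t ∉ Rel ∧ ∀ k, 1 ≤ k → k ≤ N → r k ≠ t)) :
    ∀ n, 1 ≤ n → n ≤ N →
      r n ≤ n + H + (d n - n) ∧ r n - d n ≤ H + (n - d n) :=
  stmt3_general N H d r hd_mono hr_mono hd1 hdr Rel hRel_card hno_idle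
end

section
/- In the abstract retrieval timeline (the hypothesis |Rel| ≤ H is not needed for this statement), for every n ∈ {1,…,N} the number of idle time-steps in {1,…,r(n)} is at most max(d(n) − n, 0); moreover, every idle time-step t with t ≤ r(n) satisfies t ≤ d(n) − 1. -/
/-! An idle step `t ≤ r n` precedes `d n`, since container `n` is available on `[d n, r n]`;
nor is it any of the departure times `d 1 < ⋯ < d (n - 1)`, at which the departing container
is available. So the idle steps fit into `[1, d n)` minus `n - 1` points. -/

open Set

theorem ncard_le_sub_of_subset_Ico_sdiff_image {S : Set ℕ} {d : ℕ → ℕ} {n : ℕ}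
    (hd : StrictMonoOn d (Icc 1 n)) (hd1 : 1 ≤ d 1) (hS : S ⊆ Ico 1 (d n) \ d '' Ico 1 n) :
    S.ncard ≤ d n - n := by
  have himage : d '' Ico 1 n ⊆ Ico 1 (d n) := by
    rintro _ ⟨k, ⟨hk1, hkn⟩, rfl⟩
    have hk : k ∈ Icc 1 n := ⟨hk1, hkn.le⟩
    exact ⟨hd1.trans (hd.monotoneOn ⟨le_rfl, hk1.trans hkn.le⟩ hk hk1),
      hd hk ⟨hk1.trans hkn.le, le_rfl⟩ hkn⟩
  calc S.ncard ≤ (Ico 1 (d n) \ d '' Ico 1 n).ncard := ncard_le_ncard hS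
    _ = (d n - 1) - (n - 1) := by
      rw [ncard_sdiff himage, (hd.injOn.mono Ico_subset_Icc_self).ncard_image, ncard_Ico_nat,
        ncard_Ico_nat]
    _ ≤ d n - n := by omega

theorem stmt4_general (N : ℕ) (d r : ℕ → ℕ)
    (hd_mono : ∀ k k', 1 ≤ k → k' ≤ N → k < k' → d k < d k')
    (hd1 : 1 ≤ d 1)
    (hdr : ∀ k, 1 ≤ k → k ≤ N → d k ≤ r k)
    (Rel : Finset ℕ)
    (hno_idle : ∀ t, 1 ≤ t → (∃ k, 1 ≤ k ∧ k ≤ N ∧ d k ≤ t ∧ t ≤ r k) →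
      ¬ (t ∉ Rel ∧ ∀ k, 1 ≤ k → k ≤ N → r k ≠ t)) :
    ∀ n, 1 ≤ n → n ≤ N →
      {t | 1 ≤ t ∧ t ≤ r n ∧ t ∉ Rel ∧ ∀ k, 1 ≤ k → k ≤ N → r k ≠ t}.ncard ≤ d n - n ∧
      ∀ t, 1 ≤ t → t ≤ r n → t ∉ Rel → (∀ k, 1 ≤ k → k ≤ N → r k ≠ t) →
        t ≤ d n - 1 := by
  intro n hn1 hnN
  have idle_lt : ∀ t, 1 ≤ t → t ≤ r n → t ∉ Rel → (∀ k, 1 ≤ k → k ≤ N → r k ≠ t) →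
      t < d n := fun t ht htr hRel hret ↦ by
    by_contra! hdt
    exact hno_idle t ht ⟨n, hn1, hnN, hdt, htr⟩ ⟨hRel, hret⟩
  refine ⟨?_, fun t ht htr hRel hret ↦ Nat.le_sub_one_of_lt (idle_lt t ht htr hRel hret)⟩
  refine ncard_le_sub_of_subset_Ico_sdiff_image
    (fun a ha b hb hab ↦ hd_mono a b ha.1 (hb.2.trans hnN) hab) hd1 ?_
  rintro t ⟨ht, htr, hRel, hret⟩
  refine ⟨⟨ht, idle_lt t ht htr hRel hret⟩, ?_⟩
  rintro ⟨k, ⟨hk1, hkn⟩, rfl⟩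
  exact hno_idle (d k) ht ⟨k, hk1, by omega, le_rfl, hdr k hk1 (by omega)⟩ ⟨hRel, hret⟩

/-- abstract retrieval timeline; the bound `|Rel| ≤ H` is not needed and is
not assumed.  Fix `N : ℕ` with `N ≥ 1`.  `d k` is the departure time and `r k` the
retrieval time of container `k ∈ {1,…,N}`; both are strictly increasing on `{1,…,N}`,
`d 1 ≥ 1` and `d k ≤ r k`.  `Rel` is a finite set of positive time-steps (the relocation
steps), disjoint from the retrieval times.  A time-step `t ≥ 1` is idle if `t ∉ Rel` and
`t ≠ r k` for all `k ∈ {1,…,N}`; we assume that whenever some container is available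
(`d k ≤ t ≤ r k` for some `k`), `t` is not idle.  Then for every `n ∈ {1,…,N}` the number
of idle time-steps in `{1,…,r n}` is at most `max (d n − n) 0` (realized by truncated
`ℕ` subtraction `d n - n`), and moreover every idle time-step `t ≤ r n` satisfies
`t ≤ d n − 1`. -/
theorem stmt4 (N : ℕ) (hN : 1 ≤ N) (d r : ℕ → ℕ)
    (hd_mono : ∀ k k', 1 ≤ k → k' ≤ N → k < k' → d k < d k')
    (hr_mono : ∀ k k', 1 ≤ k → k' ≤ N → k < k' → r k < r k')
    (hd1 : 1 ≤ d 1)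
    (hdr : ∀ k, 1 ≤ k → k ≤ N → d k ≤ r k)
    (Rel : Finset ℕ)
    (hRel_pos : ∀ t ∈ Rel, 1 ≤ t)
    (hRel_disj : ∀ t ∈ Rel, ∀ k, 1 ≤ k → k ≤ N → r k ≠ t)
    (hno_idle : ∀ t, 1 ≤ t → (∃ k, 1 ≤ k ∧ k ≤ N ∧ d k ≤ t ∧ t ≤ r k) →
      ¬ (t ∉ Rel ∧ ∀ k, 1 ≤ k → k ≤ N → r k ≠ t)) :
    ∀ n, 1 ≤ n → n ≤ N →
      {t | 1 ≤ t ∧ t ≤ r n ∧ t ∉ Rel ∧ ∀ k, 1 ≤ k → k ≤ N → r k ≠ t}.ncard ≤ d n - n ∧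
      ∀ t, 1 ≤ t → t ≤ r n → t ∉ Rel → (∀ k, 1 ≤ k → k ≤ N → r k ≠ t) →
        t ≤ d n - 1 :=
  stmt4_general N d r hd_mono hd1 hdr Rel hno_idle
end

section
/- Consider the CRP model with a strictly increasing departure schedule d and no upper time windows, and suppose the set of FCFS-feasible sequences from the given initial configuration is nonempty. Then among the FCFS-feasible sequences whose relocation count equals the minimum relocation count, there exists a sequence M* with the following property: for every time-step t of M*, if some container is available at t, then the move of M* at time-step t is not idle. -/
/-! An idle step `t` at which some container is available can be exchanged with the next busy
step `t'`. Under FCFS the container retrieved at `t'` leaves no later than the available one,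
so it is already due at `t`; the exchange keeps feasibility, the relocation count and all
earlier steps, and it makes step `t` busy. Repairing the offending steps from left to right
turns a minimum-relocation sequence into one that never idles while a container is available.
-/

open Finset

variable {C P N T : ℕ}

def bayContents (b : CRPConfig C) : Multiset ℕ := ∑ i, (b i : Multiset ℕ)

lemma mem_bayContents {b : CRPConfig C} {c : ℕ} : c ∈ bayContents b ↔ ∃ i, c ∈ b i := by
  simp [bayContents]

namespace CRPStep

variable {b b' : CRPConfig C}

lemma bayContents_of_retrieve {i : Fin C} (h : CRPStep P b (.retrieve i) b') :
    bayContents b = (b i).head! ::ₘ bayContents b' := by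
  obtain ⟨hne, rfl⟩ := h
  have key : ∀ j, (b j : Multiset ℕ) =
      ((if j = i then (b i).tail else b j : List ℕ) : Multiset ℕ) +
        if j = i then {(b i).head!} else 0 := by
    intro j
    split_ifs with hj
    · subst hj
      conv_lhs => rw [← List.cons_head!_tail hne]
      rw [← Multiset.cons_coe, ← Multiset.singleton_add, add_comm]
    · rw [add_zero]
  rw [bayContents, Finset.sum_congr rfl (fun j _ => key j), sum_add_distrib, sum_ite_eq',
    if_pos (mem_univ i), add_comm, Multiset.singleton_add]
  rfl

lemma bayContents_of_reloc {i k : Fin C} (h : CRPStep P b (.reloc i k) b') :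
    bayContents b' = bayContents b := by
  obtain ⟨hik, hne, -, rfl⟩ := h
  have key : ∀ j, ((if j = i then (b i).tail else if j = k then (b i).head! :: b k else b j :
      List ℕ) : Multiset ℕ) + (if j = i then {(b i).head!} else 0) =
      (b j : Multiset ℕ) + if j = k then {(b i).head!} else 0 := by
    intro j
    by_cases hji : j = i
    · subst hji
      conv_rhs => rw [← List.cons_head!_tail hne]
      simp only [if_true, if_neg hik, add_zero]
      rw [← Multiset.cons_coe, ← Multiset.singleton_add, add_comm]
    · by_cases hjk : j = k
      · subst hjk
        simp only [if_true, if_neg hji, add_zero]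
        rw [← Multiset.cons_coe, ← Multiset.singleton_add, add_comm]
      · simp [hji, hjk]
  have hsum := Finset.sum_congr rfl (fun j (_ : j ∈ univ) => key j)
  simp only [sum_add_distrib, sum_ite_eq', mem_univ, if_true] at hsum
  exact add_right_cancel hsum

lemma bayContents_le {mv : CRPMove C} (h : CRPStep P b mv b') :
    bayContents b' ≤ bayContents b := by
  cases mv with
  | idle => rw [show b' = b from h]
  | reloc i k => exact (bayContents_of_reloc h).le
  | retrieve i => exact (bayContents_of_retrieve h).symm ▸ Multiset.le_cons_self _ _

end CRPStep

namespace CRPSeq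

variable (M : CRPSeq C P N T)

lemma bayContents_antitone {u v : ℕ} (huv : u ≤ v) (hv : v ≤ T) :
    bayContents (M.conf v) ≤ bayContents (M.conf u) := by
  induction v, huv using Nat.le_induction with
  | base => exact le_rfl
  | succ v _ ih => exact ((M.step (v + 1) (by omega) hv).bayContents_le).trans (ih (by omega))

lemma nodup_bayContents_zero : (bayContents (M.conf 0)).Nodup := by
  refine Multiset.nodup_iff_count_le_one.2 fun c => ?_
  rw [bayContents, Multiset.count_sum']
  simp only [Multiset.coe_count]
  by_cases hc : ∃ i, c ∈ M.conf 0 i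
  · obtain ⟨i, hi⟩ := hc
    rw [Finset.sum_eq_single i
      (fun j _ hji => List.count_eq_zero.2 (M.init_disjoint i j hji.symm c hi))
      (fun h => absurd (mem_univ i) h)]
    exact List.nodup_iff_count_le_one.1 (M.init_nodup i) c
  · push Not at hc
    simp [List.count_eq_zero.2 (hc _)]

lemma not_mem_conf_of_retrievesAt {n s u : ℕ} (hr : RetrievesAt M n s) (hsu : s ≤ u)
    (hu : u ≤ T) (i : Fin C) : n ∉ M.conf u i := by
  obtain ⟨hs1, hsT, j, hmv, hhead⟩ := hr
  have hstep := M.step s hs1 hsT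
  rw [hmv] at hstep
  have hcons := hstep.bayContents_of_retrieve
  rw [List.head!_eq_head?_getD, hhead, Option.getD_some] at hcons
  have hnodup := Multiset.nodup_of_le (M.bayContents_antitone (Nat.zero_le (s - 1)) (by omega))
    M.nodup_bayContents_zero
  rw [hcons] at hnodup
  exact fun hmem => (Multiset.nodup_cons.1 hnodup).1 <|
    Multiset.mem_of_le (M.bayContents_antitone hsu hu) (mem_bayContents.2 ⟨i, hmem⟩)

lemma lt_of_retrievesAt_of_mem {n s u : ℕ} {i : Fin C} (hr : RetrievesAt M n s)
    (hmem : n ∈ M.conf u i) (hu : u ≤ T) : u < s :=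
  Nat.lt_of_not_le fun hsu => M.not_mem_conf_of_retrievesAt hr hsu hu i hmem

lemma mv_ne_idle_of_retrievesAt {n s : ℕ} (h : RetrievesAt M n s) : M.mv s ≠ .idle := by
  obtain ⟨-, -, i, hmv, -⟩ := h
  rw [hmv]
  exact nofun

lemma retrievesAt_unique {a b s : ℕ} (ha : RetrievesAt M a s) (hb : RetrievesAt M b s) :
    a = b := by
  obtain ⟨-, -, i, hmv, ha⟩ := ha
  obtain ⟨-, -, j, hmv', hb⟩ := hb
  cases hmv.symm.trans hmv'
  exact Option.some_injective _ (ha.symm.trans hb)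

lemma conf_eq_of_idle {a b : ℕ} (hab : a ≤ b) (hb : b ≤ T)
    (hidle : ∀ s, a < s → s ≤ b → M.mv s = .idle) : M.conf b = M.conf a := by
  induction b, hab using Nat.le_induction with
  | base => rfl
  | succ b _ ih =>
    have hs := M.step (b + 1) (by omega) hb
    rw [hidle (b + 1) (by omega) le_rfl] at hs
    exact hs.trans (ih (by omega) fun s h1 h2 => hidle s h1 (by omega))

end CRPSeq

namespace CRPFeasible

variable {M : CRPSeq C P N T} {d r : ℕ → ℕ}

/-- Under FCFS, if `n` overtook some `k < n`, then `n` and, inductively, all of `1, …, k - 1`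
would be retrieved before `k`: that is `k` containers, one more than flexibility `0` allows. -/
lemma strictMonoOn_of_fcfs (hF : CRPFeasible M d 0 r) : StrictMonoOn r (Set.Icc 1 N) := by
  suffices key : ∀ n, n ≤ N → ∀ k, 1 ≤ k → k < n → r k < r n from
    fun k hk n hn hkn => key n hn.2 k hk.1 hkn
  intro n
  induction n using Nat.strong_induction_on with
  | _ n ih =>
  intro hnN k hk1 hkn
  have hne : r k ≠ r n := fun he => by
    have := M.retrievesAt_unique (he ▸ hF.retrieves k hk1 (by omega))
      (hF.retrieves n (by omega) hnN)
    omega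
  by_contra! hle
  have hsub : ((insert n (Icc 1 (k - 1)) : Finset ℕ) : Set ℕ) ⊆
      {n' | 1 ≤ n' ∧ n' ≤ N ∧ r n' < r k} := by
    intro x hx
    simp only [coe_insert, coe_Icc, Set.mem_insert_iff, Set.mem_Icc] at hx
    rcases hx with rfl | ⟨hx1, hxk⟩
    · exact ⟨by omega, hnN, lt_of_le_of_ne hle hne.symm⟩
    · exact ⟨hx1, by omega, ih k hkn (by omega) x hx1 (by omega)⟩
  have hcard := Set.ncard_le_ncard hsub
    ((Set.finite_Icc 1 N).subset fun x hx => ⟨hx.1, hx.2.1⟩)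
  rw [Set.ncard_coe_finset, card_insert_of_notMem (by simp; omega), Nat.card_Icc] at hcard
  have := hF.flex k hk1 (by omega)
  omega

end CRPFeasible

lemma swap_lt_swap_iff_of_notMem_Ico {t t' a b : ℕ} (htt' : t < t') (ha : a < t ∨ t' ≤ a)
    (hb : b < t ∨ t' ≤ b) : Equiv.swap t t' a < Equiv.swap t t' b ↔ a < b := by
  simp only [Equiv.swap_apply_def]
  split_ifs <;> omega

namespace CRPSeq

lemma conf_sub_one_eq_of_idle (M : CRPSeq C P N T) {t t' : ℕ} (htt' : t < t') (ht'T : t' ≤ T)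
    (hidle : ∀ s, t ≤ s → s < t' → M.mv s = .idle) : M.conf (t' - 1) = M.conf (t - 1) :=
  M.conf_eq_of_idle (by omega) (by omega) fun s h1 h2 => hidle s (by omega) (by omega)

section Advance

variable (M : CRPSeq C P N T) {t t' : ℕ} (ht : 1 ≤ t) (htt' : t < t') (ht'T : t' ≤ T)
  (hidle : ∀ s, t ≤ s → s < t' → M.mv s = .idle)

/-- The sequence that performs the move of step `t'` already at step `t`, and idles during
`(t, t']` instead of `[t, t')`. -/
def advance : CRPSeq C P N T where
  conf s := if t ≤ s ∧ s < t' then M.conf t' else M.conf s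
  mv s := M.mv (Equiv.swap t t' s)
  init_height := by simpa [show ¬t ≤ 0 by omega] using M.init_height
  init_labels := by simpa [show ¬t ≤ 0 by omega] using M.init_labels
  init_nodup := by simpa [show ¬t ≤ 0 by omega] using M.init_nodup
  init_disjoint := by simpa [show ¬t ≤ 0 by omega] using M.init_disjoint
  init_all := by simpa [show ¬t ≤ 0 by omega] using M.init_all
  step s hs1 hsT := by
    rcases lt_trichotomy s t with hs | rfl | hs
    · rw [if_neg (by omega), if_neg (by omega),
        Equiv.swap_apply_of_ne_of_ne (by omega) (by omega)]
      exact M.step s hs1 hsT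
    · rw [if_neg (by omega), if_pos ⟨le_rfl, htt'⟩, Equiv.swap_apply_left,
        ← M.conf_sub_one_eq_of_idle htt' ht'T hidle]
      exact M.step t' (by omega) ht'T
    rcases lt_trichotomy s t' with hs' | rfl | hs'
    · rw [if_pos ⟨by omega, by omega⟩, if_pos ⟨by omega, hs'⟩,
        Equiv.swap_apply_of_ne_of_ne (by omega) (by omega), hidle s (by omega) hs']
      rfl
    · rw [if_pos ⟨by omega, by omega⟩, if_neg (by omega), Equiv.swap_apply_right,
        hidle t le_rfl htt']
      rfl
    · rw [if_neg (by omega), if_neg (by omega),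
        Equiv.swap_apply_of_ne_of_ne (by omega) (by omega)]
      exact M.step s hs1 hsT

lemma advance_conf_of_lt {s : ℕ} (hs : s < t) :
    (M.advance ht htt' ht'T hidle).conf s = M.conf s :=
  if_neg (by omega)

lemma advance_mv (s : ℕ) :
    (M.advance ht htt' ht'T hidle).mv s = M.mv (Equiv.swap t t' s) :=
  rfl

lemma retrievesAt_advance_iff {n s : ℕ} :
    RetrievesAt (M.advance ht htt' ht'T hidle) n s ↔ RetrievesAt M n (Equiv.swap t t' s) := by
  by_cases hmid : t < s ∧ s ≤ t'
  · have hidle' : M.mv (Equiv.swap t t' s) = .idle := by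
      rcases hmid.2.eq_or_lt with rfl | hs'
      · rw [Equiv.swap_apply_right, hidle t le_rfl htt']
      · rw [Equiv.swap_apply_of_ne_of_ne (by omega) (by omega), hidle s (by omega) hs']
    exact iff_of_false
      (fun h => (M.advance ht htt' ht'T hidle).mv_ne_idle_of_retrievesAt h hidle')
      (fun h => M.mv_ne_idle_of_retrievesAt h hidle')
  have hconf : (M.advance ht htt' ht'T hidle).conf (s - 1) = M.conf (Equiv.swap t t' s - 1) := by
    by_cases hst : s = t
    · rw [hst, Equiv.swap_apply_left, M.conf_sub_one_eq_of_idle htt' ht'T hidle]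
      exact M.advance_conf_of_lt ht htt' ht'T hidle (by omega)
    · rw [Equiv.swap_apply_of_ne_of_ne hst (by omega)]
      exact if_neg (by omega)
  have hbounds : 1 ≤ s ∧ s ≤ T ↔ 1 ≤ Equiv.swap t t' s ∧ Equiv.swap t t' s ≤ T := by
    rw [Equiv.swap_apply_def]
    split_ifs <;> omega
  simp only [RetrievesAt, hconf, advance_mv, ← and_assoc, hbounds]

lemma relocCount_advance : relocCount (M.advance ht htt' ht'T hidle) = relocCount M := by
  refine card_equiv (Equiv.swap t t') fun s => ?_
  have hbounds : s ∈ Icc 1 T ↔ Equiv.swap t t' s ∈ Icc 1 T := by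
    simp only [mem_Icc, Equiv.swap_apply_def]
    split_ifs <;> omega
  rw [mem_filter, mem_filter, ← hbounds]
  rfl

lemma _root_.CRPFeasible.advance {d r : ℕ → ℕ} {m : ℕ} (hF : CRPFeasible M d m r)
    (hdep : ∀ n, 1 ≤ n → n ≤ N → r n = t' → d n ≤ t) :
    CRPFeasible (M.advance ht htt' ht'T hidle) d m (fun n => Equiv.swap t t' (r n)) := by
  have hr : ∀ n, 1 ≤ n → n ≤ N → r n < t ∨ t' ≤ r n := fun n hn1 hnN => by
    by_contra! h
    exact M.mv_ne_idle_of_retrievesAt (hF.retrieves n hn1 hnN) (hidle _ h.1 h.2)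
  refine ⟨fun n hn1 hnN => ?_, fun n s hn1 hnN hs => ?_, fun n hn1 hnN => ?_,
    fun n hn1 hnN => ?_⟩
  · rw [retrievesAt_advance_iff, Equiv.swap_apply_self]
    exact hF.retrieves n hn1 hnN
  · rw [← hF.unique n _ hn1 hnN ((M.retrievesAt_advance_iff ht htt' ht'T hidle).1 hs),
      Equiv.swap_apply_self]
  · by_cases hrn : r n = t'
    · rw [hrn, Equiv.swap_apply_right]
      exact hdep n hn1 hnN hrn
    · rw [Equiv.swap_apply_of_ne_of_ne (by have := hr n hn1 hnN; omega) hrn]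
      exact hF.onTime n hn1 hnN
  · convert hF.flex n hn1 hnN using 3
    ext k
    simp only [and_congr_right_iff]
    exact fun hk1 hkN => swap_lt_swap_iff_of_notMem_Ico htt' (hr k hk1 hkN) (hr n hn1 hnN)

end Advance

end CRPSeq

namespace CRPFeasible

variable {M : CRPSeq C P N T} {d r : ℕ → ℕ}

/-- Under FCFS, the container retrieved at the first busy step `t'` after an idle step `t` at
which `m` is available leaves no later than `m`, so it is already due at `t`. -/
lemma exists_advance_of_idle (hd : StrictSchedule N d) (hF : CRPFeasible M d 0 r) {t : ℕ}
    (ht : 1 ≤ t) (htT : t ≤ T) (hidle : M.mv t = .idle) {m : ℕ} (hm : AvailableAt M d m t) :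
    ∃ (M' : CRPSeq C P N T) (r' : ℕ → ℕ), CRPFeasible M' d 0 r' ∧
      relocCount M' = relocCount M ∧ (∀ s < t, M'.conf s = M.conf s ∧ M'.mv s = M.mv s) ∧
      M'.mv t ≠ .idle := by
  classical
  obtain ⟨hm1, hmN, hdm, im, hmem⟩ := hm
  have hrm := hF.retrieves m hm1 hmN
  have hbusy := M.mv_ne_idle_of_retrievesAt hrm
  have hrm_gt : t < r m := by
    have := M.lt_of_retrievesAt_of_mem hrm hmem (by omega)
    have : r m ≠ t := fun h => hbusy (h ▸ hidle)
    omega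
  have hex : ∃ s, t < s ∧ M.mv s ≠ .idle := ⟨r m, hrm_gt, hbusy⟩
  obtain ⟨htt', ht'⟩ := Nat.find_spec hex
  have ht'T : Nat.find hex ≤ T := (Nat.find_min' hex ⟨hrm_gt, hbusy⟩).trans hrm.2.1
  have hidle' : ∀ s, t ≤ s → s < Nat.find hex → M.mv s = .idle := fun s h1 h2 => by
    rcases h1.eq_or_lt with rfl | h1
    · exact hidle
    · by_contra h
      exact Nat.find_min hex h2 ⟨h1, h⟩
  refine ⟨M.advance ht htt' ht'T hidle', _, hF.advance M ht htt' ht'T hidle' ?_,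
    M.relocCount_advance ht htt' ht'T hidle', fun s hs => ?_, ?_⟩
  · intro n hn1 hnN hrn
    have hmem' : m ∈ M.conf (Nat.find hex - 1) im := by
      rwa [M.conf_sub_one_eq_of_idle htt' ht'T hidle']
    have := M.lt_of_retrievesAt_of_mem hrm hmem' (by omega)
    have hnm : n ≤ m :=
      (hF.strictMonoOn_of_fcfs.le_iff_le ⟨hn1, hnN⟩ ⟨hm1, hmN⟩).1 (by omega)
    rcases hnm.eq_or_lt with rfl | hnm
    · exact hdm
    · exact ((hd.2 n m hn1 hmN hnm).le).trans hdm
  · rw [M.advance_conf_of_lt ht htt' ht'T hidle' hs, M.advance_mv,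
      Equiv.swap_apply_of_ne_of_ne (by omega) (by omega)]
    exact ⟨rfl, rfl⟩
  · rwa [M.advance_mv, Equiv.swap_apply_left]

end CRPFeasible

def CRPSeq.NonIdlingUpTo (M : CRPSeq C P N T) (d : ℕ → ℕ) (k : ℕ) : Prop :=
  ∀ t, 1 ≤ t → t ≤ k → t ≤ T → (∃ n, AvailableAt M d n t) → M.mv t ≠ .idle

lemma CRPFeasible.exists_nonIdlingUpTo {M : CRPSeq C P N T} {d r : ℕ → ℕ}
    (hd : StrictSchedule N d) (hF : CRPFeasible M d 0 r) (k : ℕ) :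
    ∃ (M' : CRPSeq C P N T) (r' : ℕ → ℕ), M'.conf 0 = M.conf 0 ∧ CRPFeasible M' d 0 r' ∧
      relocCount M' = relocCount M ∧ M'.NonIdlingUpTo d k := by
  induction k with
  | zero => exact ⟨M, r, rfl, hF, rfl, fun t ht1 htk _ _ => by omega⟩
  | succ k ih =>
    obtain ⟨M, r, h0, hF, hR, hk⟩ := ih
    by_cases hbad : k + 1 ≤ T ∧ M.mv (k + 1) = .idle ∧ ∃ n, AvailableAt M d n (k + 1)
    · obtain ⟨hT, hidle, m, hm⟩ := hbad
      obtain ⟨M', r', hF', hR', hpre, hne⟩ :=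
        hF.exists_advance_of_idle hd (by omega) hT hidle hm
      refine ⟨M', r', (hpre 0 (by omega)).1.trans h0, hF', hR'.trans hR,
        fun t ht1 htk htT ⟨n, hn⟩ => ?_⟩
      rcases (by omega : t ≤ k ∨ t = k + 1) with htk | rfl
      · have hconf := (hpre (t - 1) (by omega)).1
        rw [(hpre t (by omega)).2]
        exact hk t ht1 htk htT ⟨n, by simpa only [AvailableAt, InBay, hconf] using hn⟩
      · exact hne
    · refine ⟨M, r, h0, hF, hR, fun t ht1 htk htT hav => ?_⟩
      rcases (by omega : t ≤ k ∨ t = k + 1) with htk | rfl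
      · exact hk t ht1 htk htT hav
      · exact fun hidle => hbad ⟨htT, hidle, hav⟩

theorem stmt5_general (C P N : ℕ) (d : ℕ → ℕ) (hd : StrictSchedule N d)
    (b0 : CRPConfig C)
    (hne : ∃ T, ∃ M : CRPSeq C P N T, ∃ r, M.conf 0 = b0 ∧ CRPFeasible M d 0 r) :
    ∃ T, ∃ M : CRPSeq C P N T, ∃ r, M.conf 0 = b0 ∧ CRPFeasible M d 0 r ∧
      relocCount M = sInf (FCFSRelocSet C P N d b0) ∧
      ∀ t, 1 ≤ t → t ≤ T → (∃ n, AvailableAt M d n t) → M.mv t ≠ CRPMove.idle := by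
  obtain ⟨T, M, r, h0, hF⟩ := hne
  obtain ⟨T, M, r, h0, hF, hmin⟩ : sInf (FCFSRelocSet C P N d b0) ∈ FCFSRelocSet C P N d b0 :=
    Nat.sInf_mem ⟨relocCount M, T, M, r, h0, hF, rfl⟩
  obtain ⟨M', r', h0', hF', hR', hbusy⟩ := hF.exists_nonIdlingUpTo hd T
  exact ⟨T, M', r', h0'.trans h0, hF', hR'.trans hmin, fun t ht1 htT => hbusy t ht1 htT htT⟩

/-- with a strictly increasing departure schedule `d` and no upper time
windows, suppose the set of FCFS-feasible sequences from the initial configuration `b0`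
is nonempty.  Then among the FCFS-feasible sequences whose relocation count equals the
minimum relocation count `sInf (FCFSRelocSet C P N d b0)`, there is a sequence `M*` such
that for every time-step `t` of `M*`, if some container is available at `t`, then the
move of `M*` at `t` is not idle. -/
theorem stmt5 (C P N : ℕ) (hN : 1 ≤ N) (d : ℕ → ℕ) (hd : StrictSchedule N d)
    (b0 : CRPConfig C)
    (hne : ∃ T, ∃ M : CRPSeq C P N T, ∃ r, M.conf 0 = b0 ∧ CRPFeasible M d 0 r) :
    ∃ T, ∃ M : CRPSeq C P N T, ∃ r, M.conf 0 = b0 ∧ CRPFeasible M d 0 r ∧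
      relocCount M = sInf (FCFSRelocSet C P N d b0) ∧
      ∀ t, 1 ≤ t → t ≤ T → (∃ n, AvailableAt M d n t) → M.mv t ≠ CRPMove.idle :=
  stmt5_general C P N d hd b0 hne
end

section
/- Consider the CRP model with a strictly increasing departure schedule d. Let m be a natural number and let M be a feasible sequence with flexibility level m. Suppose that at some time-step t the move of M is a relocation of a container c whose departure time has already passed, i.e., d(c) ≤ t. Then there exists a feasible sequence M' from the same initial configuration with flexibility level m+1 such that the relocation count of M' is strictly less than the relocation count of M and every container is retrieved in M' no later than in M (r'(n) ≤ r(n) for all n; in particular container c is retrieved at time t in M'). -/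
/-! The relocation of `c` at step `t` is replaced by its retrieval, and from then on `c` is
simply erased from every stack: a later move that touches `c` becomes idle, and every
other move acts on the erased configurations exactly as before. So the other containers
keep their retrieval times, `c` leaves at `t` instead of `r c > t`, and the advance of
`c` adds at most one container to the set retrieved before any given container. -/

open Function

lemma List.head?_erase_of_head?_ne {α : Type*} [BEq α] [LawfulBEq α] {l : List α} {c : α}
    (h : l.head? ≠ some c) : (l.erase c).head? = l.head? := by
  rcases l with _ | ⟨a, l⟩
  · rfl
  · simp_all [List.erase_cons_tail]

namespace CRPConfig

variable {C : ℕ}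

def Nodup (b : CRPConfig C) : Prop :=
  (∀ i, (b i).Nodup) ∧ ∀ i j, i ≠ j → ∀ x ∈ b i, x ∉ b j

def erase (b : CRPConfig C) (c : ℕ) : CRPConfig C := fun i => (b i).erase c

@[simp]
lemma erase_apply (b : CRPConfig C) (c : ℕ) (i : Fin C) : b.erase c i = (b i).erase c := rfl

lemma erase_update (b : CRPConfig C) (i : Fin C) (l : List ℕ) (c : ℕ) :
    erase (update b i l) c = update (b.erase c) i (l.erase c) :=
  funext fun j => apply_update (fun _ l => l.erase c) b i l j

lemma erase_eq_self {b : CRPConfig C} {c : ℕ} (hc : ∀ j, c ∉ b j) : b.erase c = b :=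
  funext fun j => List.erase_of_not_mem (hc j)

lemma erase_update_cons {b : CRPConfig C} {c : ℕ} (hc : ∀ j, c ∉ b j) (k : Fin C) :
    erase (update b k (c :: b k)) c = b := by
  rw [erase_update, erase_eq_self hc, List.erase_cons_head, update_eq_self]

lemma Nodup.of_sublist {b b' : CRPConfig C} (hb : b.Nodup) (h : ∀ j, (b' j).Sublist (b j)) :
    b'.Nodup :=
  ⟨fun j => (hb.1 j).sublist (h j),
    fun i j hij x hi hj => hb.2 i j hij x ((h i).subset hi) ((h j).subset hj)⟩

lemma Nodup.update_cons {b : CRPConfig C} (hb : b.Nodup) {x : ℕ} (hx : ∀ j, x ∉ b j)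
    (k : Fin C) : Nodup (update b k (x :: b k)) := by
  refine ⟨fun j => ?_, fun i j hij y hi hj => ?_⟩
  · rcases eq_or_ne j k with rfl | hjk
    · simpa using ⟨hx j, hb.1 j⟩
    · simpa [hjk] using hb.1 j
  · have hmem : ∀ j, y ∈ update b k (x :: b k) j → (j = k ∧ y = x) ∨ y ∈ b j := by
      intro j h
      rcases eq_or_ne j k with rfl | hjk <;> simp_all
    rcases hmem i hi with ⟨rfl, rfl⟩ | hi'
    · rcases hmem j hj with ⟨rfl, -⟩ | hj'
      exacts [hij rfl, hx j hj']
    · rcases hmem j hj with ⟨-, rfl⟩ | hj'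
      exacts [hx i hi', hb.2 i j hij y hi' hj']

lemma sublist_update_tail (b : CRPConfig C) (i j : Fin C) :
    (update b i (b i).tail j).Sublist (b j) := by
  rcases eq_or_ne j i with rfl | hji
  · simpa using List.tail_sublist _
  · simp [hji]

lemma Nodup.not_mem_update_tail {b : CRPConfig C} (hb : b.Nodup) {i : Fin C} {c : ℕ}
    (hc : (b i).head? = some c) (j : Fin C) : c ∉ update b i (b i).tail j := by
  obtain ⟨l, hl⟩ : ∃ l, b i = c :: l := ⟨_, List.eq_cons_of_mem_head? hc⟩
  rcases eq_or_ne j i with rfl | hji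
  · simpa [hl] using (List.nodup_cons.mp (hl ▸ hb.1 j)).1
  · simpa [hji] using hb.2 i j hji.symm c (by simp [hl])

lemma Nodup.erase_eq_update_tail {b : CRPConfig C} (hb : b.Nodup) {i : Fin C} {c : ℕ}
    (hc : (b i).head? = some c) : b.erase c = update b i (b i).tail := by
  have hcons : update (update b i (b i).tail) i (c :: update b i (b i).tail i) = b := by
    simp [← List.eq_cons_of_mem_head? hc]
  have h := erase_update_cons (hb.not_mem_update_tail hc) i
  rwa [hcons] at h

end CRPConfig

def CRPMove.Moves {C : ℕ} (b : CRPConfig C) (c : ℕ) : CRPMove C → Prop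
  | .idle => False
  | .reloc i _ => (b i).head? = some c
  | .retrieve i => (b i).head? = some c

namespace CRPStep

variable {C P : ℕ} {b b' : CRPConfig C} {mv : CRPMove C}

lemma reloc_iff {i k : Fin C} : CRPStep P b (.reloc i k) b' ↔ i ≠ k ∧ b i ≠ [] ∧
    (b k).length < P ∧ b' = update (update b i (b i).tail) k ((b i).head! :: b k) := by
  refine and_congr_right fun hik => and_congr_right fun _ => and_congr_right fun _ => ?_
  suffices (fun j => if j = i then (b i).tail else if j = k then (b i).head! :: b k else b j) =
      update (update b i (b i).tail) k ((b i).head! :: b k) by rw [this]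
  funext j
  rcases eq_or_ne j k with rfl | hjk
  · simp [Ne.symm hik]
  · simp [update_apply, hjk]

lemma retrieve_iff {i : Fin C} :
    CRPStep P b (.retrieve i) b' ↔ b i ≠ [] ∧ b' = update b i (b i).tail := by
  simp only [CRPStep, ← update_apply]

lemma nodup (h : CRPStep P b mv b') (hb : b.Nodup) : b'.Nodup := by
  cases mv with
  | idle => exact (show b' = b from h) ▸ hb
  | reloc i k =>
    obtain ⟨hik, hne, -, rfl⟩ := reloc_iff.mp h
    obtain ⟨a, l, hl⟩ := List.exists_cons_of_ne_nil hne
    have hb₀ := hb.of_sublist (CRPConfig.sublist_update_tail b i)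
    have hk : b k = update b i (b i).tail k := by simp [Ne.symm hik]
    simpa [hk] using hb₀.update_cons (hb.not_mem_update_tail (by simp [hl])) k
  | retrieve i =>
    obtain ⟨-, rfl⟩ := retrieve_iff.mp h
    exact hb.of_sublist (CRPConfig.sublist_update_tail b i)

lemma exists_mem_of_mem_s8 (h : CRPStep P b mv b') {x : ℕ} {j : Fin C} (hx : x ∈ b' j) :
    ∃ i, x ∈ b i := by
  cases mv with
  | idle => exact ⟨j, (show b' = b from h) ▸ hx⟩
  | reloc i k =>
    obtain ⟨-, hne, -, rfl⟩ := reloc_iff.mp h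
    rcases eq_or_ne j k with rfl | hjk
    · rcases List.mem_cons.mp (by simpa using hx) with rfl | hx
      exacts [⟨i, List.head!_mem_self hne⟩, ⟨j, hx⟩]
    · exact ⟨j, (CRPConfig.sublist_update_tail b i j).subset (by simpa [hjk] using hx)⟩
  | retrieve i =>
    obtain ⟨-, rfl⟩ := retrieve_iff.mp h
    exact ⟨j, (CRPConfig.sublist_update_tail b i j).subset hx⟩

lemma erase_of_not_moves (h : CRPStep P b mv b') {c : ℕ} (hc : ¬ mv.Moves b c) :
    CRPStep P (b.erase c) mv (b'.erase c) := by
  cases mv with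
  | idle => exact congrArg (CRPConfig.erase · c) h
  | reloc i k =>
    obtain ⟨hik, hne, hlen, rfl⟩ := reloc_iff.mp h
    obtain ⟨a, l, hl⟩ := List.exists_cons_of_ne_nil hne
    have hac : a ≠ c := fun hac => hc (by simp [CRPMove.Moves, hl, hac])
    refine reloc_iff.mpr ⟨hik, ?_, List.length_erase_le.trans_lt hlen, ?_⟩
    · simp [hl, List.erase_cons_tail, hac]
    · simp [CRPConfig.erase_update, hl, List.erase_cons_tail, hac]
  | retrieve i =>
    obtain ⟨hne, rfl⟩ := retrieve_iff.mp h
    obtain ⟨a, l, hl⟩ := List.exists_cons_of_ne_nil hne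
    have hac : a ≠ c := fun hac => hc (by simp [CRPMove.Moves, hl, hac])
    refine retrieve_iff.mpr ⟨?_, ?_⟩
    · simp [hl, List.erase_cons_tail, hac]
    · simp [CRPConfig.erase_update, hl, List.erase_cons_tail, hac]

lemma erase_eq_of_moves (h : CRPStep P b mv b') (hb : b.Nodup) {c : ℕ} (hc : mv.Moves b c) :
    b'.erase c = b.erase c := by
  cases mv with
  | idle => exact hc.elim
  | reloc i k =>
    obtain ⟨hik, -, -, rfl⟩ := reloc_iff.mp h
    have hk : b k = update b i (b i).tail k := by simp [Ne.symm hik]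
    rw [hb.erase_eq_update_tail hc, List.eq_cons_of_mem_head? hc, List.head!_cons, hk]
    exact CRPConfig.erase_update_cons (hb.not_mem_update_tail hc) k
  | retrieve i =>
    obtain ⟨-, rfl⟩ := retrieve_iff.mp h
    rw [hb.erase_eq_update_tail hc]
    exact CRPConfig.erase_eq_self (hb.not_mem_update_tail hc)

lemma retrieve_of_reloc {i k : Fin C} (h : CRPStep P b (.reloc i k) b') (hb : b.Nodup) {c : ℕ}
    (hc : (b i).head? = some c) : CRPStep P b (.retrieve i) (b'.erase c) :=
  retrieve_iff.mpr ⟨(reloc_iff.mp h).2.1,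
    (h.erase_eq_of_moves hb hc).trans (hb.erase_eq_update_tail hc)⟩

end CRPStep

namespace CRPSeq

variable {C P N T : ℕ} (M : CRPSeq C P N T)

lemma nodup_conf {s : ℕ} (hs : s ≤ T) : (M.conf s).Nodup := by
  induction s with
  | zero => exact ⟨M.init_nodup, M.init_disjoint⟩
  | succ s ih => exact (M.step (s + 1) (by omega) hs).nodup (ih (by omega))

def earlyConf (t c s : ℕ) : CRPConfig C :=
  if s < t then M.conf s else (M.conf s).erase c

open Classical in
noncomputable def earlyMv (t c : ℕ) (i : Fin C) (s : ℕ) : CRPMove C :=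
  if s < t then M.mv s
  else if s = t then .retrieve i
  else if (M.mv s).Moves (M.conf (s - 1)) c then .idle else M.mv s

variable {t c : ℕ} {i k : Fin C}

lemma earlyConf_zero (ht : 1 ≤ t) : M.earlyConf t c 0 = M.conf 0 := if_pos ht

lemma step_early (hmv : M.mv t = .reloc i k) (hc : (M.conf (t - 1) i).head? = some c)
    {s : ℕ} (hs1 : 1 ≤ s) (hsT : s ≤ T) :
    CRPStep P (M.earlyConf t c (s - 1)) (M.earlyMv t c i s) (M.earlyConf t c s) := by
  have hstep := M.step s hs1 hsT
  have hb := M.nodup_conf (s := s - 1) (by omega)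
  rcases lt_trichotomy s t with hst | rfl | hts
  · simpa [earlyConf, earlyMv, hst, show s - 1 < t by omega] using hstep
  · rw [hmv] at hstep
    simpa [earlyConf, earlyMv, show s - 1 < s by omega] using hstep.retrieve_of_reloc hb hc
  · have hprev : ¬ s - 1 < t := by omega
    by_cases hmoves : (M.mv s).Moves (M.conf (s - 1)) c
    · simpa [earlyConf, earlyMv, hprev, hts.not_gt, hts.ne', hmoves, CRPStep] using
        hstep.erase_eq_of_moves hb hmoves
    · simpa [earlyConf, earlyMv, hprev, hts.not_gt, hts.ne', hmoves] using
        hstep.erase_of_not_moves hmoves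

noncomputable def retrieveEarly (ht : 1 ≤ t) (hmv : M.mv t = .reloc i k)
    (hc : (M.conf (t - 1) i).head? = some c) : CRPSeq C P N T where
  conf := M.earlyConf t c
  mv := M.earlyMv t c i
  init_height := by rw [M.earlyConf_zero ht]; exact M.init_height
  init_labels := by rw [M.earlyConf_zero ht]; exact M.init_labels
  init_nodup := by rw [M.earlyConf_zero ht]; exact M.init_nodup
  init_disjoint := by rw [M.earlyConf_zero ht]; exact M.init_disjoint
  init_all := by rw [M.earlyConf_zero ht]; exact M.init_all
  step _ := M.step_early hmv hc

variable (ht : 1 ≤ t) (hmv : M.mv t = .reloc i k) (hc : (M.conf (t - 1) i).head? = some c)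

lemma retrievesAt_retrieveEarly_self (htT : t ≤ T) :
    RetrievesAt (M.retrieveEarly ht hmv hc) c t :=
  ⟨ht, htT, i, by simp [retrieveEarly, earlyMv],
    by simpa [retrieveEarly, earlyConf, show t - 1 < t by omega] using hc⟩

lemma retrievesAt_retrieveEarly_of_lt {n s : ℕ} (hs : s < t) :
    RetrievesAt (M.retrieveEarly ht hmv hc) n s ↔ RetrievesAt M n s := by
  simp [RetrievesAt, retrieveEarly, earlyConf, earlyMv, hs, show s - 1 < t by omega]

lemma retrievesAt_retrieveEarly_of_gt {n s : ℕ} (hs : t < s) :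
    RetrievesAt (M.retrieveEarly ht hmv hc) n s ↔ n ≠ c ∧ RetrievesAt M n s := by
  have hconf : (M.retrieveEarly ht hmv hc).conf (s - 1) = (M.conf (s - 1)).erase c :=
    if_neg (by omega)
  unfold RetrievesAt
  rw [hconf]
  by_cases hmoves : (M.mv s).Moves (M.conf (s - 1)) c
  · have hidle : (M.retrieveEarly ht hmv hc).mv s = .idle := by
      simp [retrieveEarly, earlyMv, hs.not_gt, hs.ne', hmoves]
    simp only [hidle, reduceCtorEq, false_and, exists_false, and_false, false_iff]
    rintro ⟨hnc, -, -, j, hj, hn⟩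
    rw [hj] at hmoves
    exact hnc (Option.some.inj (hn.symm.trans hmoves))
  · have hsame : (M.retrieveEarly ht hmv hc).mv s = M.mv s := by
      simp [retrieveEarly, earlyMv, hs.not_gt, hs.ne', hmoves]
    rw [hsame]
    constructor
    · rintro ⟨hs1, hsT, j, hj, hn⟩
      have hne : (M.conf (s - 1) j).head? ≠ some c := by rwa [hj] at hmoves
      rw [CRPConfig.erase_apply, List.head?_erase_of_head?_ne hne] at hn
      exact ⟨fun hnc => hne (hnc ▸ hn), hs1, hsT, j, hj, hn⟩
    · rintro ⟨hnc, hs1, hsT, j, hj, hn⟩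
      refine ⟨hs1, hsT, j, hj, ?_⟩
      rwa [CRPConfig.erase_apply, List.head?_erase_of_head?_ne (by simpa [hn] using hnc)]

lemma relocCount_retrieveEarly_lt (htT : t ≤ T) :
    relocCount (M.retrieveEarly ht hmv hc) < relocCount M := by
  unfold relocCount
  refine Finset.card_lt_card ((Finset.ssubset_iff_of_subset fun s => ?_).mpr ⟨t, ?_, ?_⟩)
  · rw [Finset.mem_filter, Finset.mem_filter]
    refine And.imp_right fun hs => ?_
    simp only [retrieveEarly, earlyMv] at hs
    split_ifs at hs <;> simp_all [CRPMove.isReloc]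
  · exact Finset.mem_filter.mpr ⟨Finset.mem_Icc.mpr ⟨ht, htT⟩, by rw [hmv]; rfl⟩
  · intro h
    simpa [retrieveEarly, earlyMv, CRPMove.isReloc] using (Finset.mem_filter.mp h).2

end CRPSeq

namespace RetrievesAt

variable {C P N T : ℕ} {M : CRPSeq C P N T} {n s : ℕ}

lemma not_mem_conf (h : RetrievesAt M n s) {u : ℕ} (hsu : s ≤ u) (huT : u ≤ T) (j : Fin C) :
    n ∉ M.conf u j := by
  obtain ⟨hs1, hsT, i, hmv, hn⟩ := h
  induction u, hsu using Nat.le_induction generalizing j with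
  | base =>
    have hstep := M.step s hs1 hsT
    rw [hmv, CRPStep.retrieve_iff] at hstep
    rw [hstep.2]
    exact (M.nodup_conf (by omega)).not_mem_update_tail hn j
  | succ u hsu ih =>
    intro hu
    obtain ⟨j', hj'⟩ := (M.step (u + 1) (by omega) huT).exists_mem_of_mem_s8 hu
    exact ih (by omega) j' hj'

lemma eq {n' : ℕ} (h : RetrievesAt M n s) (h' : RetrievesAt M n' s) : n = n' := by
  obtain ⟨-, -, i, hmv, hn⟩ := h
  obtain ⟨-, -, i', hmv', hn'⟩ := h'
  obtain rfl : i = i' := CRPMove.retrieve.inj (hmv.symm.trans hmv')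
  exact Option.some.inj (hn.symm.trans hn')

lemma ne_of_mv_eq_reloc {t : ℕ} {i k : Fin C} (h : RetrievesAt M n s)
    (hmv : M.mv t = .reloc i k) : s ≠ t := by
  rintro rfl
  obtain ⟨-, -, j, hj, -⟩ := h
  rw [hmv] at hj
  cases hj

end RetrievesAt

lemma ncard_update_lt_le {N : ℕ} {r : ℕ → ℕ} {c t : ℕ} (htc : t ≤ r c) (n : ℕ) :
    {n' | 1 ≤ n' ∧ n' ≤ N ∧ update r c t n' < update r c t n}.ncard ≤
      {n' | 1 ≤ n' ∧ n' ≤ N ∧ r n' < r n}.ncard + 1 := by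
  refine (Set.ncard_le_ncard ?_ (((Set.finite_Icc 1 N).subset ?_).insert c)).trans
    (Set.ncard_insert_le c _)
  · rintro x ⟨hx1, hxN, hx⟩
    rcases eq_or_ne x c with rfl | hxc
    · exact Set.mem_insert _ _
    refine Or.inr ⟨hx1, hxN, ?_⟩
    rw [update_of_ne hxc] at hx
    rcases eq_or_ne n c with rfl | hnc
    · rw [update_self] at hx
      omega
    · rwa [update_of_ne hnc] at hx
  · exact fun x hx => ⟨hx.1, hx.2.1⟩

namespace CRPFeasible

variable {C P N T : ℕ} {M : CRPSeq C P N T} {d : ℕ → ℕ} {m : ℕ} {r : ℕ → ℕ} {t c : ℕ}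
  {i k : Fin C}

lemma lt_of_mv_eq_reloc (hM : CRPFeasible M d m r) (hc1 : 1 ≤ c) (hcN : c ≤ N) (ht : 1 ≤ t)
    (htT : t ≤ T) (hmv : M.mv t = .reloc i k) (hc : (M.conf (t - 1) i).head? = some c) :
    t < r c := by
  have hret := hM.retrieves c hc1 hcN
  refine lt_of_le_of_ne (not_lt.mp fun hlt => ?_) (hret.ne_of_mv_eq_reloc hmv).symm
  exact hret.not_mem_conf (by omega) (by omega) i (List.mem_of_mem_head? hc)

lemma retrieveEarly (hM : CRPFeasible M d m r) (hc1 : 1 ≤ c) (hcN : c ≤ N) (ht : 1 ≤ t)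
    (htT : t ≤ T) (hmv : M.mv t = .reloc i k) (hc : (M.conf (t - 1) i).head? = some c)
    (hdc : d c ≤ t) : CRPFeasible (M.retrieveEarly ht hmv hc) d (m + 1) (update r c t) := by
  have htc := hM.lt_of_mv_eq_reloc hc1 hcN ht htT hmv hc
  refine ⟨fun n hn1 hnN => ?_, fun n s hn1 hnN hs => ?_, fun n hn1 hnN => ?_,
    fun n hn1 hnN => ?_⟩
  · rcases eq_or_ne n c with rfl | hnc
    · simpa using M.retrievesAt_retrieveEarly_self ht hmv hc htT
    have hret := hM.retrieves n hn1 hnN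
    rw [update_of_ne hnc]
    rcases lt_or_gt_of_ne (hret.ne_of_mv_eq_reloc hmv) with hlt | hgt
    · exact (M.retrievesAt_retrieveEarly_of_lt ht hmv hc hlt).mpr hret
    · exact (M.retrievesAt_retrieveEarly_of_gt ht hmv hc hgt).mpr ⟨hnc, hret⟩
  · rcases lt_trichotomy s t with hlt | rfl | hgt
    · have hrn :=
        hM.unique n s hn1 hnN ((M.retrievesAt_retrieveEarly_of_lt ht hmv hc hlt).mp hs)
      rcases eq_or_ne n c with rfl | hnc
      · omega
      · rwa [update_of_ne hnc]
    · rw [hs.eq (M.retrievesAt_retrieveEarly_self ht hmv hc htT), update_self]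
    · obtain ⟨hnc, hs'⟩ := (M.retrievesAt_retrieveEarly_of_gt ht hmv hc hgt).mp hs
      rw [update_of_ne hnc]
      exact hM.unique n s hn1 hnN hs'
  · rcases eq_or_ne n c with rfl | hnc
    · simpa using hdc
    · simpa [hnc] using hM.onTime n hn1 hnN
  · have := hM.flex n hn1 hnN
    have := ncard_update_lt_le (N := N) htc.le n
    omega

end CRPFeasible

theorem stmt8_general (C P N : ℕ) (d : ℕ → ℕ)
    (m : ℕ) (T : ℕ) (M : CRPSeq C P N T) (r : ℕ → ℕ) (hM : CRPFeasible M d m r)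
    (t c : ℕ) (ht1 : 1 ≤ t) (htT : t ≤ T) (hc1 : 1 ≤ c) (hcN : c ≤ N)
    (hreloc : ∃ i k : Fin C, M.mv t = CRPMove.reloc i k ∧
      (M.conf (t - 1) i).head? = some c)
    (hdc : d c ≤ t) :
    ∃ T', ∃ M' : CRPSeq C P N T', ∃ r',
      M'.conf 0 = M.conf 0 ∧ CRPFeasible M' d (m + 1) r' ∧
      relocCount M' < relocCount M ∧
      (∀ n, 1 ≤ n → n ≤ N → r' n ≤ r n) ∧
      r' c = t := by
  obtain ⟨i, k, hmv, hc⟩ := hreloc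
  have htc := hM.lt_of_mv_eq_reloc hc1 hcN ht1 htT hmv hc
  exact ⟨T, M.retrieveEarly ht1 hmv hc, update r c t, M.earlyConf_zero ht1,
    hM.retrieveEarly hc1 hcN ht1 htT hmv hc hdc, M.relocCount_retrieveEarly_lt ht1 hmv hc htT,
    fun n _ _ => update_le_self_iff.mpr htc.le n, update_self c t r⟩

/-- with a strictly increasing departure schedule `d`, let `m : ℕ` and let
`M` be a feasible sequence with flexibility level `m` (retrieval times `r`).  Suppose
that at some time-step `t ∈ {1,…,T}` the move of `M` is a relocation of a container
`c` (the top of the source column at the beginning of step `t`) whose departure time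
has already passed, `d c ≤ t`.  Then there is a feasible sequence `M'` from the same
initial configuration with flexibility level `m + 1` (retrieval times `r'`) such that
the relocation count of `M'` is strictly less than that of `M`, every container is
retrieved in `M'` no later than in `M` (`r' n ≤ r n` for all `n ∈ {1,…,N}`), and in
particular container `c` is retrieved at time `t` in `M'` (`r' c = t`). -/
theorem stmt8 (C P N : ℕ) (hN : 1 ≤ N) (d : ℕ → ℕ) (hd : StrictSchedule N d)
    (m : ℕ) (T : ℕ) (M : CRPSeq C P N T) (r : ℕ → ℕ) (hM : CRPFeasible M d m r)
    (t c : ℕ) (ht1 : 1 ≤ t) (htT : t ≤ T) (hc1 : 1 ≤ c) (hcN : c ≤ N)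
    (hreloc : ∃ i k : Fin C, M.mv t = CRPMove.reloc i k ∧
      (M.conf (t - 1) i).head? = some c)
    (hdc : d c ≤ t) :
    ∃ T', ∃ M' : CRPSeq C P N T', ∃ r',
      M'.conf 0 = M.conf 0 ∧ CRPFeasible M' d (m + 1) r' ∧
      relocCount M' < relocCount M ∧
      (∀ n, 1 ≤ n → n ≤ N → r' n ≤ r n) ∧
      r' c = t :=
  stmt8_general C P N d m T M r hM t c ht1 htT hc1 hcN hreloc hdc
end

section
/- Consider the CRP model with two strictly increasing departure schedules d and d' for the same N containers and the same initial configuration, and no upper time windows. If the set of FCFS-feasible sequences for schedule d is nonempty, then the set of FCFS-feasible sequences for schedule d' is also nonempty, and the minimum relocation count over FCFS-feasible sequences for schedule d equals the minimum relocation count over FCFS-feasible sequences for schedule d'. In particular, the minimum number of relocations needed to retrieve all containers under the FCFS policy depends only on the initial configuration and the retrieval order, not on the actual arrival times of the external trucks. -/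
/-! Without upper time windows a retrieval may always be postponed. Prefixing a feasible
sequence with `K` idle steps, where `K` bounds every departure time of the other schedule,
keeps the retrieval order and the relocations, and makes every retrieval late enough for the
other schedule. So both schedules have the same set of FCFS relocation counts. -/

namespace CRPSeq

variable {C P N T : ℕ}

def delay (M : CRPSeq C P N T) (K : ℕ) : CRPSeq C P N (T + K) where
  conf t := M.conf (t - K)
  mv t := if K < t then M.mv (t - K) else .idle
  init_height i := by simpa using M.init_height i
  init_labels i := by simpa using M.init_labels i
  init_nodup i := by simpa using M.init_nodup i
  init_disjoint i j h := by simpa using M.init_disjoint i j h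
  init_all n h1 h2 := by simpa using M.init_all n h1 h2
  step t ht hT := by
    by_cases h : K < t
    · simp only [if_pos h, Nat.sub_right_comm t 1 K]
      exact M.step (t - K) (by omega) (by omega)
    · simp only [if_neg h]
      show M.conf (t - K) = M.conf (t - 1 - K)
      rw [Nat.sub_eq_zero_of_le (by omega : t ≤ K), Nat.sub_eq_zero_of_le (by omega : t - 1 ≤ K)]

variable (M : CRPSeq C P N T) (K : ℕ)

@[simp]
lemma delay_conf_zero : (M.delay K).conf 0 = M.conf 0 := by
  simp [delay]

lemma retrievesAt_delay_iff {n t : ℕ} :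
    RetrievesAt (M.delay K) n t ↔ K < t ∧ RetrievesAt M n (t - K) := by
  by_cases h : K < t
  · simp only [RetrievesAt, delay, if_pos h, Nat.sub_right_comm t 1 K]
    constructor
    · rintro ⟨-, ht, hi⟩
      exact ⟨h, by omega, by omega, hi⟩
    · rintro ⟨-, -, ht, hi⟩
      exact ⟨by omega, by omega, hi⟩
  · simp [RetrievesAt, delay, h]

lemma retrievesAt_delay_add {n t : ℕ} :
    RetrievesAt (M.delay K) n (t + K) ↔ RetrievesAt M n t := by
  rw [retrievesAt_delay_iff, Nat.add_sub_cancel]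
  exact ⟨And.right, fun h => ⟨by have := h.1; omega, h⟩⟩

lemma delay_mv_of_lt {t : ℕ} (h : K < t) : (M.delay K).mv t = M.mv (t - K) :=
  if_pos h

lemma lt_of_isReloc_delay_mv {t : ℕ} (h : ((M.delay K).mv t).isReloc = true) : K < t := by
  by_contra hle
  simp [delay, hle, CRPMove.isReloc] at h

lemma relocCount_delay : relocCount (M.delay K) = relocCount M := by
  refine Finset.card_bij' (fun t _ => t - K) (fun s _ => s + K) ?_ ?_ ?_ ?_ <;>
    intro t ht <;> simp only [Finset.mem_filter, Finset.mem_Icc] at ht ⊢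
  · have hK := M.lt_of_isReloc_delay_mv K ht.2
    rw [delay_mv_of_lt M K hK] at ht
    exact ⟨⟨by omega, by omega⟩, ht.2⟩
  · rw [delay_mv_of_lt M K (by omega), Nat.add_sub_cancel]
    exact ⟨⟨by omega, by omega⟩, ht.2⟩
  · have := M.lt_of_isReloc_delay_mv K ht.2
    omega
  · omega

end CRPSeq

lemma CRPFeasible.delay {C P N T : ℕ} {M : CRPSeq C P N T} {d d' : ℕ → ℕ} {m : ℕ}
    {r : ℕ → ℕ} (hf : CRPFeasible M d m r) (K : ℕ)
    (hK : ∀ n, 1 ≤ n → n ≤ N → d' n ≤ r n + K) :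
    CRPFeasible (M.delay K) d' m (fun n => r n + K) where
  retrieves n h1 h2 := (M.retrievesAt_delay_add K).2 (hf.retrieves n h1 h2)
  unique n t h1 h2 ht := by
    obtain ⟨hKt, hret⟩ := (M.retrievesAt_delay_iff K).1 ht
    have := hf.unique n (t - K) h1 h2 hret
    omega
  onTime := hK
  flex n h1 h2 := by
    simpa only [Nat.add_lt_add_iff_right] using hf.flex n h1 h2

lemma fcfsRelocSet_subset (C P N : ℕ) (d d' : ℕ → ℕ) (b0 : CRPConfig C) :
    FCFSRelocSet C P N d b0 ⊆ FCFSRelocSet C P N d' b0 := by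
  rintro R ⟨T, M, r, h0, hf, rfl⟩
  set K := (Finset.Icc 1 N).sup d'
  have hK : ∀ n, 1 ≤ n → n ≤ N → d' n ≤ r n + K := fun n h1 h2 =>
    (Finset.le_sup (f := d') (Finset.mem_Icc.2 ⟨h1, h2⟩)).trans (Nat.le_add_left _ _)
  exact ⟨T + K, M.delay K, _, by simpa using h0, hf.delay K hK, M.relocCount_delay K⟩

lemma fcfsRelocSet_eq (C P N : ℕ) (d d' : ℕ → ℕ) (b0 : CRPConfig C) :
    FCFSRelocSet C P N d b0 = FCFSRelocSet C P N d' b0 :=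
  (fcfsRelocSet_subset C P N d d' b0).antisymm (fcfsRelocSet_subset C P N d' d b0)

theorem stmt9_general (C P N : ℕ) (d d' : ℕ → ℕ)
    (b0 : CRPConfig C)
    (hne : ∃ T, ∃ M : CRPSeq C P N T, ∃ r, M.conf 0 = b0 ∧ CRPFeasible M d 0 r) :
    (∃ T, ∃ M : CRPSeq C P N T, ∃ r, M.conf 0 = b0 ∧ CRPFeasible M d' 0 r) ∧
    sInf (FCFSRelocSet C P N d b0) = sInf (FCFSRelocSet C P N d' b0) := by
  obtain ⟨T, M, r, h0, hf⟩ := hne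
  have hmem : relocCount M ∈ FCFSRelocSet C P N d' b0 :=
    fcfsRelocSet_subset C P N d d' b0 ⟨T, M, r, h0, hf, rfl⟩
  obtain ⟨T', M', r', h0', hf', -⟩ := hmem
  exact ⟨⟨T', M', r', h0', hf'⟩, by rw [fcfsRelocSet_eq C P N d d' b0]⟩

/-- with two strictly increasing departure schedules `d` and `d'` for the
same `N` containers and the same initial configuration `b0`, and no upper time windows:
if the set of FCFS-feasible sequences for schedule `d` is nonempty, then the set of
FCFS-feasible sequences for schedule `d'` is also nonempty, and the minimum relocation
count over FCFS-feasible sequences for `d` equals that for `d'` — the minimum number of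
relocations under FCFS depends only on the initial configuration and the retrieval order,
not on the actual arrival times of the external trucks. -/
theorem stmt9 (C P N : ℕ) (hN : 1 ≤ N) (d d' : ℕ → ℕ)
    (hd : StrictSchedule N d) (hd' : StrictSchedule N d')
    (b0 : CRPConfig C)
    (hne : ∃ T, ∃ M : CRPSeq C P N T, ∃ r, M.conf 0 = b0 ∧ CRPFeasible M d 0 r) :
    (∃ T, ∃ M : CRPSeq C P N T, ∃ r, M.conf 0 = b0 ∧ CRPFeasible M d' 0 r) ∧
    sInf (FCFSRelocSet C P N d b0) = sInf (FCFSRelocSet C P N d' b0) :=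
  stmt9_general C P N d d' b0 hne
end
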